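/- arXiv:2501.06133 — 6 statements merged into one kernel-verified Lean document; each statement's English description precedes it below -/
import Mathlib

section
/- Let n ≥ 1 and let u, z ∈ ℝ^n. Call M = {(i_1,j_1),…,(i_L,j_L)} a valid matching if all 2L indices are distinct elements of [n], L ≤ ⌊n/2⌋, and z_{i_ℓ} ≤ z_{j_ℓ} for each ℓ. Define S(u,z) = sup over valid matchings M of ( Σ_{ℓ=1}^L max{u_{i_ℓ} − u_{j_ℓ}, 0}^2 )^{1/2}, and define I(u,z) = inf over nondecreasing functions g: ℝ → ℝ of ( Σ_{i=1}^n (u_i − g(z_i))^2 )^{1/2}. Then I(u,z) ≤ S(u,z) ≤ √2 · I(u,z). -/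
noncomputable section

/-- `S(u,z)`: the supremum, over all valid matchings `M = {(i_ℓ, j_ℓ)}_{ℓ=1}^L`
(distinct indices, `L ≤ ⌊n/2⌋`, and `z_{i_ℓ} ≤ z_{j_ℓ}`), of
`(∑_ℓ max{u_{i_ℓ} − u_{j_ℓ}, 0}²)^{1/2}`. -/
def matchingScore (n : ℕ) (u z : Fin n → ℝ) : ℝ :=
  sSup {r : ℝ | ∃ (L : ℕ) (i j : Fin L → Fin n),
    Function.Injective (Sum.elim i j) ∧ L ≤ n / 2 ∧
    (∀ ℓ, z (i ℓ) ≤ z (j ℓ)) ∧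
    r = Real.sqrt (∑ ℓ, max (u (i ℓ) - u (j ℓ)) 0 ^ 2)}

/-- `I(u,z)`: the infimum over nondecreasing `g : ℝ → ℝ` of
`(∑_i (u_i − g(z_i))²)^{1/2}`. -/
def isotonicDist (n : ℕ) (u z : Fin n → ℝ) : ℝ :=
  sInf {r : ℝ | ∃ g : ℝ → ℝ, Monotone g ∧
    r = Real.sqrt (∑ i, (u i - g (z i)) ^ 2)}

/-!
For the upper bound, compare each matched pair with a monotone fit `g`: since
`g (z i) ≤ g (z j)`, `(u i - u j)₊ ≤ (u i - g (z i)) - (u j - g (z j))`, whose square is at most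
twice the sum of the two squared residuals; the pairs are disjoint, so summing costs a factor `2`.

For the lower bound, let `v` be the isotonic regression of `u` (the projection onto the closed
convex cone of vectors that are monotone in `z`), and `r = u - v`. Moving `v` up or down by a
small amount on part of a level set `{v = c}` keeps it isotonic, so the variational inequality
of the projection shows that `r` sums to zero on each level set and to something nonnegative on
each `z`-lower part of it. On such a "balanced" block there is a matching of positive residuals
to later negative residuals with `∑ r² ≤ ∑ (r i - r j)²`: move mass `m = min (r i) (-r j)` from a
positive `i` to the first negative `j` above it, which keeps the block balanced, kills one
nonzero entry and lowers `∑ r²` by exactly `2 m (r i - r j - m)`. In the matching obtained by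
induction at most one pair uses `i` or `j`, and undoing the transfer widens its gap by `m`;
either keeping it or replacing it by `(i, j)` recovers the loss. Within a level set
`u i - u j = r i - r j`, and `v` extends to a monotone `g` with `g ∘ z = v`.
-/

open Finset

variable {ι β : Type*}

theorem sq_add_two_mul_le_max {x m M : ℝ} (hx : 0 ≤ x) (hm : 0 ≤ m) :
    x ^ 2 + 2 * m * M ≤ max ((m + M) ^ 2) ((x + m) ^ 2) := by
  rcases le_total x M with h | h
  · exact le_max_of_le_left (by nlinarith)
  · exact le_max_of_le_right (by nlinarith)

theorem max_sub_sq_le_two_mul {x y a b : ℝ} (hab : a ≤ b) :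
    max (x - y) 0 ^ 2 ≤ 2 * ((x - a) ^ 2 + (y - b) ^ 2) := by
  rcases le_total (x - y) 0 with h | h
  · rw [max_eq_right h, zero_pow two_ne_zero]; positivity
  · rw [max_eq_left h]; nlinarith [sq_nonneg (x - a + (y - b))]

theorem sInf_le_sSup_and_sSup_le_mul_sInf {S I : Set ℝ} {c : ℝ} (hc : 0 ≤ c)
    (hI : ∀ t ∈ I, 0 ≤ t) (hSI : ∀ s ∈ S, ∀ t ∈ I, s ≤ c * t)
    (hex : ∃ s ∈ S, ∃ t ∈ I, t ≤ s) : sInf I ≤ sSup S ∧ sSup S ≤ c * sInf I := by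
  obtain ⟨s₀, hs₀, t₀, ht₀, hts⟩ := hex
  have hSbdd : BddAbove S := ⟨c * t₀, fun s hs => hSI s hs t₀ ht₀⟩
  refine ⟨(csInf_le ⟨0, hI⟩ ht₀).trans (hts.trans (le_csSup hSbdd hs₀)),
    csSup_le ⟨s₀, hs₀⟩ fun s hs => ?_⟩
  rw [← smul_eq_mul, ← Real.sInf_smul_of_nonneg hc]
  refine le_csInf ⟨c • t₀, Set.smul_mem_smul_set ht₀⟩ ?_
  rintro _ ⟨t, ht, rfl⟩
  exact hSI s hs t ht

section Matching

def IsMatching (M : Finset (ι × ι)) : Prop :=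
  ∀ p ∈ M, ∀ q ∈ M, p.1 = q.1 ∨ p.1 = q.2 ∨ p.2 = q.1 ∨ p.2 = q.2 → p = q

theorem IsMatching.mono {M N : Finset (ι × ι)} (hM : IsMatching M) (h : N ⊆ M) :
    IsMatching N :=
  fun p hp q hq => hM p (h hp) q (h hq)

theorem IsMatching.exists_injective_sumElim {M : Finset (ι × ι)} (hM : IsMatching M)
    (hne : ∀ p ∈ M, p.1 ≠ p.2) (f : ι × ι → ℝ) :
    ∃ (L : ℕ) (i j : Fin L → ι), Function.Injective (Sum.elim i j) ∧
      (∀ ℓ, (i ℓ, j ℓ) ∈ M) ∧ ∑ ℓ, f (i ℓ, j ℓ) = ∑ p ∈ M, f p := by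
  let e := M.equivFin.symm
  have he (x y) (h : (e x).1.1 = (e y).1.1 ∨ (e x).1.1 = (e y).1.2 ∨ (e x).1.2 = (e y).1.1 ∨
      (e x).1.2 = (e y).1.2) : x = y :=
    e.injective (Subtype.ext (hM _ (e x).2 _ (e y).2 h))
  refine ⟨M.card, fun ℓ => (e ℓ).1.1, fun ℓ => (e ℓ).1.2, ?_, fun ℓ => (e ℓ).2, ?_⟩
  · rintro (x | x) (y | y) h <;>
      simp only [Sum.elim_inl, Sum.elim_inr, Sum.inl.injEq, Sum.inr.injEq, reduceCtorEq] at h ⊢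
    · exact he x y (Or.inl h)
    · exact hne _ (e y).2 (by rw [← h, he x y (Or.inr (Or.inl h))])
    · exact hne _ (e y).2 (by rw [← h, he x y (Or.inr (Or.inr (Or.inl h)))])
    · exact he x y (Or.inr (Or.inr (Or.inr h)))
  · rw [← sum_coe_sort M]
    exact e.sum_comp (fun p => f p.1)

theorem card_le_half_of_injective_sumElim [Fintype ι] {L : ℕ} {i j : Fin L → ι}
    (h : Function.Injective (Sum.elim i j)) : L ≤ Fintype.card ι / 2 := by
  have := Fintype.card_le_of_injective _ h
  simp only [Fintype.card_sum, Fintype.card_fin] at this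
  omega

def gapSqSum (r : ι → ℝ) (M : Finset (ι × ι)) : ℝ :=
  ∑ p ∈ M, (r p.1 - r p.2) ^ 2

theorem gapSqSum_le_gapSqSum {r r' : ι → ℝ} {M : Finset (ι × ι)}
    (h : ∀ p ∈ M, 0 ≤ r' p.1 - r' p.2 ∧ r' p.1 - r' p.2 ≤ r p.1 - r p.2) :
    gapSqSum r' M ≤ gapSqSum r M :=
  sum_le_sum fun p hp => pow_le_pow_left₀ (h p hp).1 (h p hp).2 2

variable [DecidableEq ι]

theorem IsMatching.insert {M : Finset (ι × ι)} (hM : IsMatching M) {i j : ι}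
    (hi : ∀ p ∈ M, p.1 ≠ i ∧ p.2 ≠ i) (hj : ∀ p ∈ M, p.1 ≠ j ∧ p.2 ≠ j) :
    IsMatching (insert (i, j) M) := by
  intro p hp q hq h
  rcases mem_insert.1 hp with rfl | hp <;> rcases mem_insert.1 hq with rfl | hq
  · rfl
  · have := hi q hq; have := hj q hq; grind
  · have := hi p hp; have := hj p hp; grind
  · exact hM p hp q hq h

theorem IsMatching.forall_mem_erase {M : Finset (ι × ι)} (hM : IsMatching M) {p₀ : ι × ι}
    (hp₀ : p₀ ∈ M) {t : ι} (ht : p₀.1 = t ∨ p₀.2 = t) :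
    ∀ p ∈ M.erase p₀, p.1 ≠ t ∧ p.2 ≠ t := by
  intro p hp
  obtain ⟨hne, hp⟩ := mem_erase.1 hp
  constructor <;> intro h <;> exact hne (hM p hp p₀ hp₀ (by grind))

theorem isMatching_biUnion {κ : Type*} {s : Finset κ} {M : κ → Finset (ι × ι)} {f : ι → κ}
    (hM : ∀ c ∈ s, IsMatching (M c)) (hf : ∀ c ∈ s, ∀ p ∈ M c, f p.1 = c ∧ f p.2 = c) :
    IsMatching (s.biUnion M) := by
  intro p hp q hq h
  obtain ⟨c, hc, hpc⟩ := mem_biUnion.1 hp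
  obtain ⟨d, hd, hqd⟩ := mem_biUnion.1 hq
  obtain rfl : c = d := by
    have := hf c hc p hpc; have := hf d hd q hqd; grind
  exact hM c hc p hpc q hqd h

theorem gapSqSum_insert {r : ι → ℝ} {M : Finset (ι × ι)} {p : ι × ι} (hp : p ∉ M) :
    gapSqSum r (insert p M) = (r p.1 - r p.2) ^ 2 + gapSqSum r M :=
  sum_insert hp

theorem gapSqSum_erase {r : ι → ℝ} {M : Finset (ι × ι)} {p : ι × ι} (hp : p ∈ M) :
    gapSqSum r M = (r p.1 - r p.2) ^ 2 + gapSqSum r (M.erase p) :=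
  (add_sum_erase M _ hp).symm

end Matching

section Transfer

variable [DecidableEq ι]

def transferMass (r : ι → ℝ) (i j : ι) (m : ℝ) : ι → ℝ :=
  r - Pi.single i m + Pi.single j m

theorem transferMass_apply (r : ι → ℝ) (i j : ι) (m : ℝ) (t : ι) :
    transferMass r i j m t = r t - (Pi.single i m : ι → ℝ) t + (Pi.single j m : ι → ℝ) t :=
  rfl

theorem transferMass_apply_of_ne (r : ι → ℝ) {i j t : ι} (m : ℝ) (hi : t ≠ i) (hj : t ≠ j) :
    transferMass r i j m t = r t := by
  simp [transferMass_apply, hi, hj]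

theorem transferMass_apply_left (r : ι → ℝ) {i j : ι} (m : ℝ) (hij : i ≠ j) :
    transferMass r i j m i = r i - m := by
  simp [transferMass_apply, hij]

theorem transferMass_apply_right (r : ι → ℝ) {i j : ι} (m : ℝ) (hij : i ≠ j) :
    transferMass r i j m j = r j + m := by
  simp [transferMass_apply, hij.symm]

theorem transferMass_min_eq_zero (r : ι → ℝ) {i j : ι} (hij : i ≠ j) :
    transferMass r i j (min (r i) (-r j)) i = 0 ∨ transferMass r i j (min (r i) (-r j)) j = 0 := by
  rw [transferMass_apply_left r _ hij, transferMass_apply_right r _ hij]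
  rcases min_choice (r i) (-r j) with h | h <;> [left; right] <;> linarith

theorem transferMass_le_of_ne (r : ι → ℝ) {i j t : ι} {m : ℝ} (hm : 0 ≤ m) (h : t ≠ j) :
    transferMass r i j m t ≤ r t := by
  rcases eq_or_ne t i with rfl | hi
  · rw [transferMass_apply_left r m h]; linarith
  · rw [transferMass_apply_of_ne r m hi h]

theorem le_transferMass_of_ne (r : ι → ℝ) {i j t : ι} {m : ℝ} (hm : 0 ≤ m) (h : t ≠ i) :
    r t ≤ transferMass r i j m t := by
  rcases eq_or_ne t j with rfl | hj
  · rw [transferMass_apply_right r m h.symm]; linarith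
  · rw [transferMass_apply_of_ne r m h hj]

theorem transferMass_sub_add_le (r : ι → ℝ) {i j : ι} {m : ℝ} (hm : 0 ≤ m) {a b : ι}
    (ha : a ≠ j) (hb : b ≠ i) :
    transferMass r i j m a - transferMass r i j m b + (if a = i ∨ b = j then m else 0) ≤
      r a - r b := by
  rcases eq_or_ne a i with rfl | hai <;> rcases eq_or_ne b j with rfl | hbj
  · rw [transferMass_apply_left r m ha, transferMass_apply_right r m ha, if_pos (Or.inl rfl)]
    linarith
  · rw [transferMass_apply_left r m ha, transferMass_apply_of_ne r m hb hbj,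
      if_pos (Or.inl rfl)]
    linarith
  · rw [transferMass_apply_of_ne r m hai ha, transferMass_apply_right r m hb.symm,
      if_pos (Or.inr rfl)]
    linarith
  · rw [transferMass_apply_of_ne r m hai ha, transferMass_apply_of_ne r m hb hbj,
      if_neg (by tauto)]
    linarith

theorem sum_sq_transferMass {B : Finset ι} {r : ι → ℝ} {i j : ι} (hi : i ∈ B) (hj : j ∈ B)
    (hij : i ≠ j) (m : ℝ) :
    ∑ t ∈ B, transferMass r i j m t ^ 2 = ∑ t ∈ B, r t ^ 2 - 2 * m * (r i - r j - m) := by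
  have key := sum_eq_add_of_mem (f := fun t => transferMass r i j m t ^ 2 - r t ^ 2)
    i j hi hj hij fun t _ ht => by rw [transferMass_apply_of_ne r m ht.1 ht.2, sub_self]
  rw [sum_sub_distrib, transferMass_apply_left r m hij, transferMass_apply_right r m hij] at key
  linarith

theorem card_filter_transferMass_lt {B : Finset ι} {r : ι → ℝ} {i j : ι} (hi : i ∈ B)
    (hj : j ∈ B) (hri : 0 < r i) (hrj : r j < 0) :
    #{t ∈ B | transferMass r i j (min (r i) (-r j)) t ≠ 0} < #{t ∈ B | r t ≠ 0} := by
  have hij : i ≠ j := fun h => by linarith [h ▸ hri]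
  have hsub : {t ∈ B | transferMass r i j (min (r i) (-r j)) t ≠ 0} ⊆ {t ∈ B | r t ≠ 0} := by
    intro t ht
    rw [mem_filter] at ht ⊢
    refine ⟨ht.1, ?_⟩
    rcases eq_or_ne t i with rfl | hti
    · exact hri.ne'
    rcases eq_or_ne t j with rfl | htj
    · exact hrj.ne
    rw [transferMass_apply_of_ne r _ hti htj] at ht
    exact ht.2
  refine card_lt_card ((ssubset_iff_of_subset hsub).2 ?_)
  rcases transferMass_min_eq_zero r hij with h0 | h0
  · exact ⟨i, mem_filter.2 ⟨hi, hri.ne'⟩, fun h => (mem_filter.1 h).2 h0⟩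
  · exact ⟨j, mem_filter.2 ⟨hj, hrj.ne⟩, fun h => (mem_filter.1 h).2 h0⟩

end Transfer

section Balanced

variable [LinearOrder β] {z : ι → β} {B : Finset ι} {r : ι → ℝ}

def IsLowerIn (z : ι → β) (B P : Finset ι) : Prop :=
  P ⊆ B ∧ ∀ a ∈ B, ∀ b ∈ P, z a ≤ z b → a ∈ P

def IsBalanced (z : ι → β) (B : Finset ι) (r : ι → ℝ) : Prop :=
  ∑ t ∈ B, r t = 0 ∧ ∀ P, IsLowerIn z B P → 0 ≤ ∑ t ∈ P, r t

def IsDescentPair (z : ι → β) (r : ι → ℝ) (B : Finset ι) (p : ι × ι) : Prop :=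
  p.1 ∈ B ∧ p.2 ∈ B ∧ z p.1 ≤ z p.2 ∧ 0 < r p.1 ∧ r p.2 < 0

theorem isLowerIn_self (B : Finset ι) : IsLowerIn z B B :=
  ⟨subset_rfl, fun _ ha _ _ _ => ha⟩

theorem IsLowerIn.filter_lt {P : Finset ι} (hP : IsLowerIn z B P) (x : β) :
    IsLowerIn z B (P.filter (z · < x)) := by
  refine ⟨(filter_subset _ _).trans hP.1, fun a ha b hb hab => ?_⟩
  rw [mem_filter] at hb ⊢
  exact ⟨hP.2 a ha b hb.1 hab, hab.trans_lt hb.2⟩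

theorem IsBalanced.le_sum {P : Finset ι} (h : IsBalanced z B r) (hP : IsLowerIn z B P) {i : ι}
    (hi : i ∈ P) (hnn : ∀ t ∈ P, z i ≤ z t → 0 ≤ r t) : r i ≤ ∑ t ∈ P, r t := by
  rw [← sum_filter_add_sum_filter_not P (z · < z i)]
  have hlow := h.2 _ (hP.filter_lt (z i))
  have hhigh : r i ≤ ∑ t ∈ P with ¬z t < z i, r t :=
    single_le_sum (fun t ht => hnn t (mem_filter.1 ht).1 (not_lt.1 (mem_filter.1 ht).2))
      (mem_filter.2 ⟨hi, lt_irrefl _⟩)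
  linarith

theorem IsBalanced.exists_neg_above (h : IsBalanced z B r) {i : ι} (hi : i ∈ B) (hri : 0 < r i) :
    ∃ j ∈ B, z i ≤ z j ∧ r j < 0 ∧ ∀ t ∈ B, z i ≤ z t → z t < z j → 0 ≤ r t := by
  have hneg : (B.filter fun t => z i ≤ z t ∧ r t < 0).Nonempty := by
    by_contra hempty
    rw [not_nonempty_iff_eq_empty, filter_eq_empty_iff] at hempty
    have := h.le_sum (isLowerIn_self B) hi fun t ht hit => not_lt.1 fun h => hempty ht ⟨hit, h⟩
    linarith [h.1]
  obtain ⟨j, hj, hmin⟩ := exists_min_image _ z hneg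
  obtain ⟨hjB, hij, hrj⟩ := mem_filter.1 hj
  exact ⟨j, hjB, hij, hrj, fun t ht hit htj =>
    not_lt.1 fun hrt => (hmin t (mem_filter.2 ⟨ht, hit, hrt⟩)).not_gt htj⟩

theorem IsDescentPair.fst_ne_of_nonpos {p : ι × ι} (hp : IsDescentPair z r B p) {t : ι}
    (ht : r t ≤ 0) : p.1 ≠ t := fun h => by linarith [h ▸ hp.2.2.2.1]

theorem IsDescentPair.snd_ne_of_nonneg {p : ι × ι} (hp : IsDescentPair z r B p) {t : ι}
    (ht : 0 ≤ r t) : p.2 ≠ t := fun h => by linarith [h ▸ hp.2.2.2.2]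

variable [DecidableEq ι]

theorem isBalanced_transferMass (h : IsBalanced z B r) {i j : ι} (hi : i ∈ B) (hj : j ∈ B)
    (hfirst : ∀ t ∈ B, z i ≤ z t → z t < z j → 0 ≤ r t) {m : ℝ} (hm0 : 0 ≤ m) (hm : m ≤ r i) :
    IsBalanced z B (transferMass r i j m) := by
  have hsum (P : Finset ι) : ∑ t ∈ P, transferMass r i j m t =
      ∑ t ∈ P, r t - (if i ∈ P then m else 0) + (if j ∈ P then m else 0) := by
    simp only [transferMass_apply, sum_add_distrib, sum_sub_distrib, sum_pi_single']
  refine ⟨by simp [hsum, hi, hj, h.1], fun P hP => ?_⟩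
  have h0 := h.2 P hP
  rw [hsum]
  by_cases hiP : i ∈ P <;> by_cases hjP : j ∈ P <;> simp only [hiP, hjP, if_true, if_false]
  · linarith
  · have := h.le_sum hP hiP fun t ht hit =>
      hfirst t (hP.1 ht) hit (not_le.1 fun hjt => hjP (hP.2 j hj t ht hjt))
    linarith
  · linarith
  · linarith

theorem IsDescentPair.of_transferMass {i j : ι} {m : ℝ} {p : ι × ι}
    (hp : IsDescentPair z (transferMass r i j m) B p) (hm : 0 ≤ m) (h1 : p.1 ≠ j) (h2 : p.2 ≠ i) :
    IsDescentPair z r B p :=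
  ⟨hp.1, hp.2.1, hp.2.2.1, hp.2.2.2.1.trans_le (transferMass_le_of_ne r hm h1),
    (le_transferMass_of_ne r hm h2).trans_lt hp.2.2.2.2⟩

theorem IsDescentPair.ne_of_transferMass_min {i j : ι} (hij : i ≠ j) {p : ι × ι}
    (hp : IsDescentPair z (transferMass r i j (min (r i) (-r j))) B p) : p.1 ≠ j ∧ p.2 ≠ i :=
  ⟨hp.fst_ne_of_nonpos
      (by rw [transferMass_apply_right r _ hij]; linarith [min_le_right (r i) (-r j)]),
    hp.snd_ne_of_nonneg
      (by rw [transferMass_apply_left r _ hij]; linarith [min_le_left (r i) (-r j)])⟩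

theorem IsMatching.forall_mem_erase_of_transferMass_min {i j : ι} (hij : i ≠ j)
    {M : Finset (ι × ι)} (hM : IsMatching M)
    (hdesc : ∀ p ∈ M, IsDescentPair z (transferMass r i j (min (r i) (-r j))) B p)
    {p₀ : ι × ι} (hp₀ : p₀ ∈ M) (hp₀ij : p₀.1 = i ∨ p₀.2 = j) :
    ∀ p ∈ M.erase p₀, (p.1 ≠ i ∧ p.2 ≠ i) ∧ (p.1 ≠ j ∧ p.2 ≠ j) := by
  intro p hp
  have hpM := mem_of_mem_erase hp
  have hends := (hdesc p hpM).ne_of_transferMass_min hij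
  -- the transfer empties `i` or `j`, so only the other one can be an endpoint, of `p₀` alone
  rcases transferMass_min_eq_zero r hij with h0 | h0
  · have hp₀j : p₀.2 = j := hp₀ij.resolve_left ((hdesc p₀ hp₀).fst_ne_of_nonpos h0.le)
    exact ⟨⟨(hdesc p hpM).fst_ne_of_nonpos h0.le, hends.2⟩,
      hM.forall_mem_erase hp₀ (Or.inr hp₀j) p hp⟩
  · have hp₀i : p₀.1 = i := hp₀ij.resolve_right ((hdesc p₀ hp₀).snd_ne_of_nonneg h0.ge)
    exact ⟨hM.forall_mem_erase hp₀ (Or.inl hp₀i) p hp,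
      ⟨hends.1, (hdesc p hpM).snd_ne_of_nonneg h0.ge⟩⟩

theorem exists_matching_insert_or_self {M : Finset (ι × ι)} (hM : IsMatching M)
    {p₀ : ι × ι} (hp₀ : p₀ ∈ M) {i j : ι}
    (hfree : ∀ p ∈ M.erase p₀, (p.1 ≠ i ∧ p.2 ≠ i) ∧ (p.1 ≠ j ∧ p.2 ≠ j))
    (hdesc : ∀ p ∈ M, IsDescentPair z r B p) (hnew : IsDescentPair z r B (i, j)) :
    ∃ N, IsMatching N ∧ (∀ p ∈ N, IsDescentPair z r B p) ∧
      gapSqSum r (M.erase p₀) + max ((r i - r j) ^ 2) ((r p₀.1 - r p₀.2) ^ 2) ≤ gapSqSum r N := by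
  rcases le_total ((r i - r j) ^ 2) ((r p₀.1 - r p₀.2) ^ 2) with h | h
  · exact ⟨M, hM, hdesc, by rw [max_eq_right h, gapSqSum_erase hp₀, add_comm]⟩
  · have hnotin : (i, j) ∉ M.erase p₀ := fun h => (hfree _ h).1.1 rfl
    refine ⟨insert (i, j) (M.erase p₀), (hM.mono (erase_subset _ _)).insert
      (fun p hp => (hfree p hp).1) (fun p hp => (hfree p hp).2),
      (forall_mem_insert _ _ _).2 ⟨hnew, fun p hp => hdesc p (mem_of_mem_erase hp)⟩, ?_⟩
    rw [max_eq_left h, gapSqSum_insert hnotin, add_comm]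

theorem exists_matching_of_transferMass {i j : ι} (hi : i ∈ B) (hj : j ∈ B) (hz : z i ≤ z j)
    (hri : 0 < r i) (hrj : r j < 0) {M' : Finset (ι × ι)} (hM' : IsMatching M')
    (hdesc' : ∀ p ∈ M', IsDescentPair z (transferMass r i j (min (r i) (-r j))) B p) :
    ∃ M, IsMatching M ∧ (∀ p ∈ M, IsDescentPair z r B p) ∧
      gapSqSum (transferMass r i j (min (r i) (-r j))) M' +
        2 * min (r i) (-r j) * (r i - r j - min (r i) (-r j)) ≤ gapSqSum r M := by
  have hij : i ≠ j := fun h => by linarith [h ▸ hri]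
  set m := min (r i) (-r j)
  set r' := transferMass r i j m
  have hm : 0 ≤ m := le_min hri.le (by linarith)
  have hends (p) (hp : p ∈ M') := (hdesc' p hp).ne_of_transferMass_min hij
  have hdesc (p) (hp : p ∈ M') : IsDescentPair z r B p :=
    (hdesc' p hp).of_transferMass hm (hends p hp).1 (hends p hp).2
  have hpos (p) (hp : p ∈ M') : 0 ≤ r' p.1 - r' p.2 := by
    linarith [(hdesc' p hp).2.2.2.1, (hdesc' p hp).2.2.2.2]
  have hgain (p) (hp : p ∈ M') :
      r' p.1 - r' p.2 + (if p.1 = i ∨ p.2 = j then m else 0) ≤ r p.1 - r p.2 :=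
    transferMass_sub_add_le r hm (hends p hp).1 (hends p hp).2
  have hmono (M : Finset (ι × ι)) (hM : M ⊆ M') : gapSqSum r' M ≤ gapSqSum r M :=
    gapSqSum_le_gapSqSum fun p hp => ⟨hpos p (hM hp), by
      have := hgain p (hM hp); split_ifs at this <;> linarith⟩
  have hnew : IsDescentPair z r B (i, j) := ⟨hi, hj, hz, hri, hrj⟩
  have hsq : (m + (r i - r j - m)) ^ 2 = (r i - r j) ^ 2 := by ring
  by_cases htouch : ∃ p₀ ∈ M', p₀.1 = i ∨ p₀.2 = j
  · obtain ⟨p₀, hp₀, hp₀ij⟩ := htouch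
    obtain ⟨M, hM, hdescM, hval⟩ := exists_matching_insert_or_self hM' hp₀
      (hM'.forall_mem_erase_of_transferMass_min hij hdesc' hp₀ hp₀ij) hdesc hnew
    have hy : r' p₀.1 - r' p₀.2 + m ≤ r p₀.1 - r p₀.2 := by
      simpa only [if_pos hp₀ij] using hgain p₀ hp₀
    have hy2 := pow_le_pow_left₀ (by linarith [hpos p₀ hp₀]) hy 2
    have hmax := sq_add_two_mul_le_max (M := r i - r j - m) (hpos p₀ hp₀) hm
    rw [hsq] at hmax
    refine ⟨M, hM, hdescM, ?_⟩
    rw [gapSqSum_erase hp₀]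
    linarith [hmono _ (erase_subset p₀ M'), max_le_max (le_refl ((r i - r j) ^ 2)) hy2]
  · push Not at htouch
    have hnotin : (i, j) ∉ M' := fun h => (htouch _ h).1 rfl
    refine ⟨insert (i, j) M', hM'.insert (fun p hp => ⟨(htouch p hp).1, (hends p hp).2⟩)
      (fun p hp => ⟨(hends p hp).1, (htouch p hp).2⟩),
      (forall_mem_insert _ _ _).2 ⟨hnew, hdesc⟩, ?_⟩
    rw [gapSqSum_insert hnotin, ← hsq]
    nlinarith [hmono M' subset_rfl, sq_nonneg m, sq_nonneg (r i - r j - m)]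

theorem IsBalanced.exists_matching (h : IsBalanced z B r) :
    ∃ M, IsMatching M ∧ (∀ p ∈ M, IsDescentPair z r B p) ∧ ∑ t ∈ B, r t ^ 2 ≤ gapSqSum r M := by
  induction hN : #{t ∈ B | r t ≠ 0} using Nat.strong_induction_on generalizing r with
  | _ N ih =>
  by_cases hpos : ∃ i ∈ B, 0 < r i
  · obtain ⟨i, hi, hri⟩ := hpos
    obtain ⟨j, hj, hzij, hrj, hfirst⟩ := h.exists_neg_above hi hri
    have hij : i ≠ j := fun h => by linarith [h ▸ hri]
    obtain ⟨M', hM', hdesc', hsum'⟩ := ih _ (hN ▸ card_filter_transferMass_lt hi hj hri hrj)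
      (isBalanced_transferMass h hi hj hfirst (le_min hri.le (by linarith)) (min_le_left _ _)) rfl
    obtain ⟨M, hM, hdesc, hgain⟩ := exists_matching_of_transferMass hi hj hzij hri hrj hM' hdesc'
    rw [sum_sq_transferMass hi hj hij] at hsum'
    exact ⟨M, hM, hdesc, by linarith⟩
  · push Not at hpos
    have h0 := (sum_eq_zero_iff_of_nonpos hpos).1 h.1
    have : ∑ t ∈ B, r t ^ 2 = 0 := sum_eq_zero fun t ht => by rw [h0 t ht]; ring
    exact ⟨∅, fun _ h => absurd h (notMem_empty _), fun _ h => absurd h (notMem_empty _),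
      by simp [gapSqSum, this]⟩

end Balanced

section Isotonic

variable [LinearOrder β] {z : ι → β} {u v : ι → ℝ}

def IsIsotonic (z : ι → β) (v : ι → ℝ) : Prop :=
  ∀ a b, z a ≤ z b → v a ≤ v b

theorem exists_isotonic_projection [Fintype ι] (z : ι → β) (u : ι → ℝ) :
    ∃ v, IsIsotonic z v ∧ ∀ w, IsIsotonic z w → ∑ t, (u t - v t) * (w t - v t) ≤ 0 := by
  set K : Set (EuclideanSpace ℝ ι) := {w | IsIsotonic z w}
  have hconv : Convex ℝ K := by
    intro x hx y hy a b ha hb _ s t hst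
    simp only [PiLp.add_apply, PiLp.smul_apply, smul_eq_mul]
    exact add_le_add (mul_le_mul_of_nonneg_left (hx s t hst) ha)
      (mul_le_mul_of_nonneg_left (hy s t hst) hb)
  have hclosed : IsClosed K := by
    simp only [K, IsIsotonic, Set.ofPred_forall]
    exact isClosed_iInter fun s => isClosed_iInter fun t => isClosed_iInter fun _ =>
      isClosed_le (by fun_prop) (by fun_prop)
  have hne : K.Nonempty := ⟨0, fun _ _ _ => le_rfl⟩
  obtain ⟨v, hvK, hv⟩ :=
    exists_norm_eq_iInf_of_complete_convex hne hclosed.isComplete hconv (WithLp.toLp 2 u)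
  refine ⟨v, hvK, fun w hw => ?_⟩
  have := (norm_eq_iInf_iff_real_inner_le_zero hconv hvK).1 hv (WithLp.toLp 2 w) hw
  simpa [PiLp.inner_apply, mul_comm] using this

theorem exists_pos_le_abs_sub [Finite ι] (v : ι → ℝ) (c : ℝ) :
    ∃ ε > 0, ∀ t, v t ≠ c → ε ≤ |v t - c| := by
  have : ∀ᶠ ε in nhdsWithin (0 : ℝ) (Set.Ioi 0), ∀ t, v t ≠ c → ε ≤ |v t - c| := by
    refine Filter.eventually_all.2 fun t => ?_
    by_cases h : v t = c
    · exact Filter.Eventually.of_forall fun _ h' => absurd h h'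
    · exact (eventually_nhdsWithin_of_eventually_nhds
        (eventually_le_nhds (abs_pos.2 (sub_ne_zero.2 h)))).mono fun _ hε _ => hε
  exact (this.and self_mem_nhdsWithin).exists.imp fun ε h => ⟨h.2, h.1⟩

theorem IsIsotonic.add_of_levelSet (hv : IsIsotonic z v) {c ε : ℝ}
    (hgap : ∀ t, v t ≠ c → ε ≤ |v t - c|) {f : ι → ℝ} (hf0 : ∀ t, v t ≠ c → f t = 0)
    (hfε : ∀ t, |f t| ≤ ε) (hf : ∀ a b, v a = c → v b = c → z a ≤ z b → f a ≤ f b) :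
    IsIsotonic z (v + f) := by
  intro a b hab
  have hvab := hv a b hab
  have ha := abs_le.1 (hfε a)
  have hb := abs_le.1 (hfε b)
  simp only [Pi.add_apply]
  by_cases hva : v a = c <;> by_cases hvb : v b = c
  · linarith [hf a b hva hvb hab]
  · have := hgap b hvb
    rw [abs_of_nonneg (by linarith)] at this
    linarith [hf0 b hvb]
  · have := hgap a hva
    rw [abs_of_nonpos (by linarith)] at this
    linarith [hf0 a hva]
  · linarith [hf0 a hva, hf0 b hvb]

theorem isBalanced_levelSet [Fintype ι] [DecidableEq ι] (hv : IsIsotonic z v)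
    (hproj : ∀ w, IsIsotonic z w → ∑ t, (u t - v t) * (w t - v t) ≤ 0) (c : ℝ) :
    IsBalanced z {t | v t = c} (u - v) := by
  obtain ⟨ε, hε, hgap⟩ := exists_pos_le_abs_sub v c
  set L : Finset ι := {t | v t = c}
  have key (P : Finset ι) (hP : P ⊆ L) (δ : ℝ) (hδ : |δ| ≤ ε)
      (hmono : ∀ a b, v a = c → v b = c → z a ≤ z b →
        (if a ∈ P then δ else 0) ≤ (if b ∈ P then δ else 0)) :
      δ * ∑ t ∈ P, (u - v) t ≤ 0 := by
    have hiso := hv.add_of_levelSet hgap (f := fun t => if t ∈ P then δ else 0)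
      (fun t ht => if_neg fun htP => ht (mem_filter.1 (hP htP)).2)
      (fun t => by split_ifs <;> simp [hδ, hε.le]) hmono
    have := hproj _ hiso
    simp only [Pi.add_apply, add_sub_cancel_left, mul_ite, mul_zero, sum_ite_mem, univ_inter]
      at this
    simpa only [mul_sum, Pi.sub_apply, mul_comm] using this
  have hlow (P : Finset ι) (hP : IsLowerIn z L P) : 0 ≤ ∑ t ∈ P, (u - v) t := by
    have := key P hP.1 (-ε) (by simp [abs_of_pos hε]) fun a b ha _ hab => by
      by_cases hb : b ∈ P
      · simp [hb, hP.2 a (mem_filter.2 ⟨mem_univ a, ha⟩) b hb hab]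
      · split_ifs <;> simp [hε.le]
    nlinarith
  refine ⟨le_antisymm ?_ (hlow _ (isLowerIn_self _)), hlow⟩
  have := key _ subset_rfl ε (abs_of_pos hε).le fun a b ha hb _ => by
    rw [if_pos (mem_filter.2 ⟨mem_univ a, ha⟩), if_pos (mem_filter.2 ⟨mem_univ b, hb⟩)]
  nlinarith

theorem exists_matching_sq_residual_le [Fintype ι] [DecidableEq ι] (hv : IsIsotonic z v)
    (hproj : ∀ w, IsIsotonic z w → ∑ t, (u t - v t) * (w t - v t) ≤ 0) :
    ∃ M, IsMatching M ∧ (∀ p ∈ M, p.1 ≠ p.2 ∧ z p.1 ≤ z p.2) ∧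
      ∑ t, (u t - v t) ^ 2 ≤ ∑ p ∈ M, max (u p.1 - u p.2) 0 ^ 2 := by
  choose M hM hdesc hsum using fun c => (isBalanced_levelSet hv hproj c).exists_matching
  have hlevel (c) (p) (hp : p ∈ M c) : v p.1 = c ∧ v p.2 = c :=
    ⟨(mem_filter.1 (hdesc c p hp).1).2, (mem_filter.1 (hdesc c p hp).2.1).2⟩
  have hgap (c) (p) (hp : p ∈ M c) :
      ((u - v) p.1 - (u - v) p.2) ^ 2 = max (u p.1 - u p.2) 0 ^ 2 := by
    obtain ⟨-, -, -, h1, h2⟩ := hdesc c p hp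
    obtain ⟨e1, e2⟩ := hlevel c p hp
    simp only [Pi.sub_apply, e1, e2] at h1 h2 ⊢
    rw [max_eq_left (by linarith)]
    ring
  have hdisj : (↑(univ.image v) : Set ℝ).PairwiseDisjoint M := fun c _ d _ hcd =>
    disjoint_left.2 fun p hpc hpd => hcd ((hlevel c p hpc).1.symm.trans (hlevel d p hpd).1)
  refine ⟨(univ.image v).biUnion M, isMatching_biUnion (fun c _ => hM c) fun c _ => hlevel c,
    fun p hp => ?_, ?_⟩
  · obtain ⟨c, -, hpc⟩ := mem_biUnion.1 hp
    exact ⟨(hdesc c p hpc).fst_ne_of_nonpos (hdesc c p hpc).2.2.2.2.le, (hdesc c p hpc).2.2.1⟩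
  · calc ∑ t, (u t - v t) ^ 2
        = ∑ c ∈ univ.image v, ∑ t with v t = c, (u - v) t ^ 2 :=
          (sum_fiberwise_of_maps_to (fun t _ => mem_image_of_mem v (mem_univ t)) _).symm
      _ ≤ ∑ c ∈ univ.image v, ∑ p ∈ M c, max (u p.1 - u p.2) 0 ^ 2 :=
          sum_le_sum fun c _ => (hsum c).trans_eq (sum_congr rfl (hgap c))
      _ = ∑ p ∈ (univ.image v).biUnion M, max (u p.1 - u p.2) 0 ^ 2 := (sum_biUnion hdisj).symm

theorem IsIsotonic.exists_monotone_extension [Finite ι] (hv : IsIsotonic z v) :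
    ∃ g : β → ℝ, Monotone g ∧ ∀ t, g (z t) = v t := by
  have hfac : v.FactorsThrough z := fun a b h => le_antisymm (hv a b h.le) (hv b a h.ge)
  have hmono : MonotoneOn (Function.extend z v 0) (Set.range z) := by
    rintro _ ⟨a, rfl⟩ _ ⟨b, rfl⟩ h
    rw [hfac.extend_apply, hfac.extend_apply]
    exact hv a b h
  obtain ⟨g, hg, hgv⟩ := hmono.exists_monotone_extension
    ((Set.finite_range z).image _).bddBelow ((Set.finite_range z).image _).bddAbove
  exact ⟨g, hg, fun t => (hgv (Set.mem_range_self t)).symm.trans (hfac.extend_apply 0 t)⟩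

theorem exists_monotone_sum_sq_le_matching [Fintype ι] [DecidableEq ι] (z : ι → β) (u : ι → ℝ) :
    ∃ g : β → ℝ, Monotone g ∧ ∃ (L : ℕ) (i j : Fin L → ι), Function.Injective (Sum.elim i j) ∧
      (∀ ℓ, z (i ℓ) ≤ z (j ℓ)) ∧
      ∑ t, (u t - g (z t)) ^ 2 ≤ ∑ ℓ, max (u (i ℓ) - u (j ℓ)) 0 ^ 2 := by
  obtain ⟨v, hv, hproj⟩ := exists_isotonic_projection z u
  obtain ⟨g, hg, hgv⟩ := hv.exists_monotone_extension
  obtain ⟨M, hM, hpairs, hsum⟩ := exists_matching_sq_residual_le hv hproj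
  obtain ⟨L, i, j, hinj, hmem, hLsum⟩ := hM.exists_injective_sumElim (fun p hp => (hpairs p hp).1)
    fun p => max (u p.1 - u p.2) 0 ^ 2
  refine ⟨g, hg, L, i, j, hinj, fun ℓ => (hpairs _ (hmem ℓ)).2, ?_⟩
  simpa only [hgv, hLsum] using hsum

end Isotonic

theorem sum_max_sub_sq_le_two_mul [Fintype ι] [Preorder β] {κ : Type*} [Fintype κ] {z : ι → β}
    {g : β → ℝ} (hg : Monotone g) {i j : κ → ι} (hinj : Function.Injective (Sum.elim i j))
    (hz : ∀ ℓ, z (i ℓ) ≤ z (j ℓ)) (u : ι → ℝ) :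
    ∑ ℓ, max (u (i ℓ) - u (j ℓ)) 0 ^ 2 ≤ 2 * ∑ t, (u t - g (z t)) ^ 2 := by
  set F := fun t => (u t - g (z t)) ^ 2
  calc ∑ ℓ, max (u (i ℓ) - u (j ℓ)) 0 ^ 2
      ≤ ∑ ℓ, 2 * (F (i ℓ) + F (j ℓ)) := sum_le_sum fun ℓ _ => max_sub_sq_le_two_mul (hg (hz ℓ))
    _ = 2 * ∑ x ∈ univ.map ⟨_, hinj⟩, F x := by
      rw [sum_map, Fintype.sum_sum_type, ← mul_sum, sum_add_distrib]
      rfl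
    _ ≤ 2 * ∑ t, F t := by
      gcongr
      exact subset_univ _

theorem matchingScore_isotonicDist_general (n : ℕ) (u z : Fin n → ℝ) :
    isotonicDist n u z ≤ matchingScore n u z ∧
      matchingScore n u z ≤ Real.sqrt 2 * isotonicDist n u z := by
  refine sInf_le_sSup_and_sSup_le_mul_sInf (Real.sqrt_nonneg 2) ?_ ?_ ?_
  · rintro _ ⟨g, -, rfl⟩
    exact Real.sqrt_nonneg _
  · rintro _ ⟨L, i, j, hinj, -, hz, rfl⟩ _ ⟨g, hg, rfl⟩
    rw [← Real.sqrt_mul zero_le_two]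
    exact Real.sqrt_le_sqrt (sum_max_sub_sq_le_two_mul hg hinj hz u)
  · obtain ⟨g, hg, L, i, j, hinj, hz, hsum⟩ := exists_monotone_sum_sq_le_matching z u
    refine ⟨_, ⟨L, i, j, hinj, ?_, hz, rfl⟩, _, ⟨g, hg, rfl⟩, Real.sqrt_le_sqrt hsum⟩
    simpa using card_le_half_of_injective_sumElim hinj

/-- key property of oracle matching:
`I(u,z) ≤ S(u,z) ≤ √2 · I(u,z)`. -/
theorem matchingScore_isotonicDist (n : ℕ) (hn : 1 ≤ n) (u z : Fin n → ℝ) :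
    isotonicDist n u z ≤ matchingScore n u z ∧
      matchingScore n u z ≤ Real.sqrt 2 * isotonicDist n u z :=
  matchingScore_isotonicDist_general n u z

end
end

section
/- Let Z_1 ≤ Z_2 ≤ … ≤ Z_n be real numbers and u ∈ ℝ^n. Define ũ ∈ ℝ^n by ũ_i = max_{j∈[n]: Z_j ≤ Z_i} min_{k∈[n]: Z_k ≥ Z_i} Med((u_ℓ)_{ℓ: Z_j ≤ Z_ℓ ≤ Z_k}). Then ũ satisfies (Z_i − Z_j)(ũ_i − ũ_j) ≥ 0 for all i, j, so there exist m ∈ [n+1], integers 1 = n_1 < n_2 < … < n_m = n+1 and reals r_1 < r_2 < … < r_{m−1} with ũ_i = r_t for n_t ≤ i < n_{t+1}. For this representation: (a) r_t = Med((u_ℓ)_{n_t ≤ ℓ ≤ n_{t+1}−1}) for each t ∈ [m−1]; and (b) for each t ∈ [m−1] and each i ∈ {n_t, n_t+1, …, n_{t+1}−1}, Med((u_ℓ)_{ℓ: Z_{n_t} ≤ Z_ℓ ≤ Z_i}) ≥ r_t ≥ Med((u_ℓ)_{ℓ: Z_i ≤ Z_ℓ ≤ Z_{n_{t+1}−1}}).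 -/
noncomputable section

/-- The median of a finite tuple of reals (given as a list): `a_{(k+1)}` if the length is
`2k+1`, and `(a_{(k)} + a_{(k+1)})/2` if the length is `2k`. -/
def med (l : List ℝ) : ℝ :=
  let s := Multiset.sort (l : Multiset ℝ) (· ≤ ·)
  if l.length % 2 = 1 then s.getD (l.length / 2) 0
  else (s.getD (l.length / 2 - 1) 0 + s.getD (l.length / 2) 0) / 2

/-- `Med((u_ℓ)_{ℓ : lo ≤ Z_ℓ ≤ hi})`, the median of the values `u_ℓ` over indices whose
`Z`-value lies in `[lo, hi]`. -/
def subMed (n : ℕ) (Z u : Fin n → ℝ) (lo hi : ℝ) : ℝ :=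
  med (((List.finRange n).filter fun ℓ => decide (lo ≤ Z ℓ ∧ Z ℓ ≤ hi)).map u)

/-- The isotonic (ℓ₁-type) median projection
`ũ_i = max_{j : Z_j ≤ Z_i} min_{k : Z_k ≥ Z_i} Med((u_ℓ)_{ℓ : Z_j ≤ Z_ℓ ≤ Z_k})`. -/
def isoMedProj (n : ℕ) (Z u : Fin n → ℝ) (i : Fin n) : ℝ :=
  (Finset.univ.filter fun j => Z j ≤ Z i).sup'
    ⟨i, by simp⟩
    fun j =>
      (Finset.univ.filter fun k => Z i ≤ Z k).inf'
        ⟨i, by simp⟩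
        fun k => subMed n Z u (Z j) (Z k)

/-!
The median is cautious: for nonempty multisets `s` and `t`,
`min (Med s) (Med t) ≤ Med (s + t) ≤ max (Med s) (Med t)`. For the upper bound, at most half of
each part lies above `M = max (Med s) (Med t)`; when exactly half of `s + t` does, its two middle
elements are bounded by the two middle elements of the part containing the lower one. The lower
bound follows by negation. Hence cutting a window `{ℓ : Z_j ≤ Z_ℓ ≤ Z_k}` between two consecutive
values of `Z` traps its median between the medians of the two pieces.

`ũ` is isotone in `Z`, so the blocks are its level sets. If the window from the start `s` of a
block to a point `i` of the block had median below `ũ_s`, then the max-min witnesses of `ũ_i` (and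
of the last point before the block), combined with such a cut, produce the same defect for a
window of the block ending at a smaller `Z`-value, and well-founded induction on `Z_i` excludes it.
The bound at the end of a block is dual, except that `ũ` is a max-min and not a min-max; the
missing half is supplied by the fact, proved by the same induction, that every window starting
just after a block has median above the block value. Part (a) is (b) at the two ends of a block.
-/

namespace List

variable {α : Type*} [LinearOrder α]

theorem SortedLE.getElem_le_iff_countP_add_lt {w : List α} (hw : w.SortedLE) {j : ℕ}
    (hj : j < w.length) (M : α) : w[j] ≤ M ↔ w.countP (M < ·) + j < w.length := by
  constructor
  · intro h
    have hhead : (w.take (j + 1)).countP (M < ·) = 0 := by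
      refine List.countP_eq_zero.2 fun a ha => ?_
      obtain ⟨k, hk, rfl⟩ := List.mem_take_iff_getElem.1 ha
      simpa using (hw.getElem_le_getElem_of_le (by omega : k ≤ j)).trans h
    have htail := (w.drop (j + 1)).countP_le_length (p := (M < ·))
    have hsplit :=
      List.countP_append (p := (M < ·)) (l₁ := w.take (j + 1)) (l₂ := w.drop (j + 1))
    rw [List.take_append_drop] at hsplit
    simp only [List.length_drop] at htail
    omega
  · intro h
    by_contra! hlt
    have htail : (w.drop j).countP (M < ·) = w.length - j := by
      rw [← List.length_drop, List.countP_eq_length]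
      intro a ha
      obtain ⟨k, hk, rfl⟩ := List.mem_drop_iff_getElem.1 ha
      simpa using hlt.trans_le (hw.getElem_le_getElem_of_le (by omega : j ≤ j + k))
    have := (List.drop_sublist j w).countP_le (p := (M < ·))
    omega

end List

namespace Multiset

def lowerMed (s : Multiset ℝ) : ℝ := (s.sort (· ≤ ·)).getD ((card s - 1) / 2) 0

def upperMed (s : Multiset ℝ) : ℝ := (s.sort (· ≤ ·)).getD (card s / 2) 0

def median (s : Multiset ℝ) : ℝ := (s.lowerMed + s.upperMed) / 2

variable {s t : Multiset ℝ} {M e : ℝ}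

theorem sort_getD_le_iff {j : ℕ} (hj : j < card s) :
    (s.sort (· ≤ ·)).getD j 0 ≤ M ↔ s.countP (M < ·) + j < card s := by
  have hw := (s.pairwise_sort (· ≤ ·)).sortedLE
  have hcount : s.countP (M < ·) = (s.sort (· ≤ ·)).countP (M < ·) := by
    conv_lhs => rw [← s.sort_eq (· ≤ ·)]
    exact coe_countP _ _
  rw [List.getD_eq_getElem _ _ (by simpa using hj), hw.getElem_le_iff_countP_add_lt, hcount,
    length_sort]

theorem lowerMed_le_iff (hs : s ≠ 0) :
    s.lowerMed ≤ M ↔ 2 * s.countP (M < ·) ≤ card s := by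
  have := card_pos.2 hs
  rw [lowerMed, sort_getD_le_iff (by omega)]
  omega

theorem upperMed_le_iff (hs : s ≠ 0) :
    s.upperMed ≤ M ↔ 2 * s.countP (M < ·) < card s := by
  have := card_pos.2 hs
  rw [upperMed, sort_getD_le_iff (by omega)]
  omega

theorem getD_sort_mem {j : ℕ} (hj : j < card s) : (s.sort (· ≤ ·)).getD j 0 ∈ s := by
  rw [List.getD_eq_getElem _ _ (by simpa using hj), ← mem_sort (· ≤ ·)]
  exact List.getElem_mem _

theorem lowerMed_mem (hs : s ≠ 0) : s.lowerMed ∈ s :=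
  getD_sort_mem (by have := card_pos.2 hs; omega)

theorem upperMed_mem (hs : s ≠ 0) : s.upperMed ∈ s :=
  getD_sort_mem (by have := card_pos.2 hs; omega)

theorem lowerMed_le_upperMed (hs : s ≠ 0) : s.lowerMed ≤ s.upperMed := by
  have := card_pos.2 hs
  rw [lowerMed, upperMed, List.getD_eq_getElem _ _ (by simp; omega),
    List.getD_eq_getElem _ _ (by simp; omega)]
  exact (s.pairwise_sort _).sortedLE.getElem_le_getElem_of_le (by omega)

theorem lowerMed_le_median (hs : s ≠ 0) : s.lowerMed ≤ s.median := by
  have := lowerMed_le_upperMed hs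
  rw [median]; linarith

theorem le_lowerMed_of_mem (h : 2 * s.countP (M < ·) = card s) (he : e ∈ s) (heM : e ≤ M) :
    e ≤ s.lowerMed := by
  obtain ⟨i, hi, rfl⟩ := List.getElem_of_mem ((mem_sort (· ≤ ·)).2 he)
  have hi' : i < card s := by simpa using hi
  have := (sort_getD_le_iff (M := M) hi').1 (by rwa [List.getD_eq_getElem _ _ hi])
  rw [lowerMed, List.getD_eq_getElem _ _ (by simp; omega)]
  exact (s.pairwise_sort _).sortedLE.getElem_le_getElem_of_le (by omega)

theorem upperMed_le_of_mem (h : 2 * s.countP (M < ·) = card s) (he : e ∈ s) (hMe : M < e) :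
    s.upperMed ≤ e := by
  obtain ⟨i, hi, rfl⟩ := List.getElem_of_mem ((mem_sort (· ≤ ·)).2 he)
  have hi' : i < card s := by simpa using hi
  have := (sort_getD_le_iff (M := M) hi').not.1
    (by rw [List.getD_eq_getElem _ _ hi]; exact hMe.not_ge)
  rw [upperMed, List.getD_eq_getElem _ _ (by simp; omega)]
  exact (s.pairwise_sort _).sortedLE.getElem_le_getElem_of_le (by omega)

theorem median_add_le_of_two_mul_countP_eq (hs : s ≠ 0) (hcs : 2 * s.countP (M < ·) = card s)
    (hcst : 2 * (s + t).countP (M < ·) = card (s + t)) (hmem : (s + t).lowerMed ∈ s) :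
    (s + t).median ≤ s.median := by
  have hst : s + t ≠ 0 := by simp [hs]
  have hlo : (s + t).lowerMed ≤ s.lowerMed :=
    le_lowerMed_of_mem hcs hmem ((lowerMed_le_iff hst).2 hcst.le)
  have hup : (s + t).upperMed ≤ s.upperMed :=
    upperMed_le_of_mem hcst (mem_add.2 (.inl (upperMed_mem hs)))
      (not_le.1 fun h => ((upperMed_le_iff hs).1 h).ne hcs)
  rw [median, median]
  linarith

theorem median_add_le_max (hs : s ≠ 0) (ht : t ≠ 0) :
    (s + t).median ≤ max s.median t.median := by
  set M := max s.median t.median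
  have hst : s + t ≠ 0 := by simp [hs]
  have hcs := (lowerMed_le_iff (M := M) hs).1 ((lowerMed_le_median hs).trans (le_max_left _ _))
  have hct := (lowerMed_le_iff (M := M) ht).1 ((lowerMed_le_median ht).trans (le_max_right _ _))
  have hadd : (s + t).countP (M < ·) = s.countP (M < ·) + t.countP (M < ·) := countP_add _ _ _
  have hcard : card (s + t) = card s + card t := card_add _ _
  by_cases hup : (s + t).upperMed ≤ M
  · have := lowerMed_le_upperMed hst
    rw [median]
    linarith
  -- Otherwise exactly half of `s`, of `t` and of `s + t` lies above `M`.
  have hup' := (upperMed_le_iff hst).not.1 hup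
  rcases mem_add.1 (lowerMed_mem hst) with hmem | hmem
  · exact (median_add_le_of_two_mul_countP_eq (M := M) hs (by omega) (by omega) hmem).trans
      (le_max_left _ _)
  · rw [add_comm] at hmem hadd hcard hup' ⊢
    exact (median_add_le_of_two_mul_countP_eq (M := M) ht (by omega) (by omega) hmem).trans
      (le_max_right _ _)

theorem getD_sort_map_neg {j : ℕ} (hj : j < card s) :
    ((s.map (- ·)).sort (· ≤ ·)).getD j 0 = -(s.sort (· ≤ ·)).getD (card s - 1 - j) 0 := by
  have hsort : (s.map (- ·)).sort (· ≤ ·) = ((s.sort (· ≤ ·)).map (- ·)).reverse := by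
    refine List.Perm.eq_reverse_of_sortedLE_of_sortedGE ?_ (pairwise_sort _ _).sortedLE ?_
    · rw [← coe_eq_coe, sort_eq, ← map_coe, sort_eq]
    · exact (List.pairwise_map.2 ((s.pairwise_sort _).imp fun h => neg_le_neg h)).sortedGE
  rw [hsort, List.getD_eq_getElem _ _ (by simpa using hj),
    List.getD_eq_getElem _ _ (by simp; omega), List.getElem_reverse, List.getElem_map]
  simp

theorem median_map_neg (s : Multiset ℝ) : (s.map (- ·)).median = -s.median := by
  rcases eq_or_ne s 0 with rfl | hs
  · simp [median, lowerMed, upperMed]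
  have := card_pos.2 hs
  have hlo : (s.map (- ·)).lowerMed = -s.upperMed := by
    rw [lowerMed, card_map, getD_sort_map_neg (by omega), upperMed]
    congr 3; omega
  have hup : (s.map (- ·)).upperMed = -s.lowerMed := by
    rw [upperMed, card_map, getD_sort_map_neg (by omega), lowerMed]
    congr 3; omega
  rw [median, median, hlo, hup]
  ring

theorem min_le_median_add (hs : s ≠ 0) (ht : t ≠ 0) :
    min s.median t.median ≤ (s + t).median := by
  have := median_add_le_max (s := s.map (- ·)) (t := t.map (- ·)) (by simpa using hs)
    (by simpa using ht)
  rw [← map_add, median_map_neg, median_map_neg, median_map_neg, max_neg_neg] at this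
  linarith

end Multiset

theorem med_eq_median (l : List ℝ) : med l = (l : Multiset ℝ).median := by
  simp only [med, Multiset.median, Multiset.lowerMed, Multiset.upperMed, Multiset.coe_card]
  split_ifs with h
  · rw [show (l.length - 1) / 2 = l.length / 2 by omega]
    ring
  · rw [show (l.length - 1) / 2 = l.length / 2 - 1 by omega]

section Window

variable {n : ℕ}

def ConsecutiveValues (Z : Fin n → ℝ) (a c : Fin n) : Prop :=
  Z a < Z c ∧ ∀ ℓ, Z ℓ ≤ Z a ∨ Z c ≤ Z ℓ

variable {Z : Fin n → ℝ}

theorem exists_consecutiveValues_below {s c : Fin n} (h : Z s < Z c) :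
    ∃ a, ConsecutiveValues Z a c ∧ Z s ≤ Z a := by
  obtain ⟨a, ha, hmax⟩ := (Finset.univ.filter fun ℓ => Z ℓ < Z c).exists_max_image Z
    ⟨s, by simp [h]⟩
  refine ⟨a, ⟨(Finset.mem_filter.1 ha).2, fun ℓ => ?_⟩, hmax s (by simp [h])⟩
  exact (lt_or_ge (Z ℓ) (Z c)).imp (fun hℓ => hmax ℓ (by simp [hℓ])) id

theorem exists_consecutiveValues_above {c k : Fin n} (h : Z c < Z k) :
    ∃ a, ConsecutiveValues Z c a ∧ Z a ≤ Z k := by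
  obtain ⟨a, ha, hmin⟩ := (Finset.univ.filter fun ℓ => Z c < Z ℓ).exists_min_image Z
    ⟨k, by simp [h]⟩
  refine ⟨a, ⟨(Finset.mem_filter.1 ha).2, fun ℓ => ?_⟩, hmin k (by simp [h])⟩
  exact (le_or_gt (Z ℓ) (Z c)).imp id (fun hℓ => hmin ℓ (by simp [hℓ]))

variable (Z) (u : Fin n → ℝ)

def window (lo hi : ℝ) : Multiset ℝ :=
  ((List.finRange n : Multiset (Fin n)).filter fun ℓ => lo ≤ Z ℓ ∧ Z ℓ ≤ hi).map u

theorem subMed_eq_median_window (lo hi : ℝ) :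
    subMed n Z u lo hi = (window Z u lo hi).median := by
  rw [subMed, med_eq_median, window, ← Multiset.map_coe, ← Multiset.filter_coe]

variable {Z u}

theorem window_ne_zero {lo hi : ℝ} {ℓ : Fin n} (h₁ : lo ≤ Z ℓ) (h₂ : Z ℓ ≤ hi) :
    window Z u lo hi ≠ 0 := by
  have hmem : u ℓ ∈ window Z u lo hi :=
    Multiset.mem_map_of_mem u (Multiset.mem_filter.2 ⟨by simp, h₁, h₂⟩)
  rintro h
  simp [h] at hmem

theorem window_eq_add {a c : Fin n} {lo hi : ℝ} (h : ConsecutiveValues Z a c) (hlo : lo ≤ Z a)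
    (hhi : Z c ≤ hi) : window Z u lo hi = window Z u lo (Z a) + window Z u (Z c) hi := by
  have hdisj : ((List.finRange n : Multiset (Fin n)).filter fun ℓ =>
      (lo ≤ Z ℓ ∧ Z ℓ ≤ Z a) ∧ Z c ≤ Z ℓ ∧ Z ℓ ≤ hi) = 0 :=
    Multiset.filter_eq_nil.2 fun ℓ _ hℓ => (hℓ.1.2.trans_lt h.1).not_ge hℓ.2.1
  rw [window, window, window, ← Multiset.map_add, Multiset.filter_add_filter, hdisj, add_zero]
  congr 1
  refine Multiset.filter_congr fun ℓ _ => ?_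
  have hac := h.1
  rcases h.2 ℓ with hℓ | hℓ
  · constructor
    · exact fun h' => .inl ⟨h'.1, hℓ⟩
    · rintro (h' | h') <;> constructor <;> linarith [h'.1, h'.2]
  · constructor
    · exact fun h' => .inr ⟨hℓ, h'.2⟩
    · rintro (h' | h') <;> constructor <;> linarith [h'.1, h'.2]

theorem subMed_le_max_of_consecutiveValues {j a c k : Fin n} (h : ConsecutiveValues Z a c)
    (hj : Z j ≤ Z a) (hk : Z c ≤ Z k) :
    subMed n Z u (Z j) (Z k) ≤ max (subMed n Z u (Z j) (Z a)) (subMed n Z u (Z c) (Z k)) := by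
  simp only [subMed_eq_median_window, window_eq_add h hj hk]
  exact Multiset.median_add_le_max (window_ne_zero hj le_rfl) (window_ne_zero le_rfl hk)

theorem min_le_subMed_of_consecutiveValues {j a c k : Fin n} (h : ConsecutiveValues Z a c)
    (hj : Z j ≤ Z a) (hk : Z c ≤ Z k) :
    min (subMed n Z u (Z j) (Z a)) (subMed n Z u (Z c) (Z k)) ≤ subMed n Z u (Z j) (Z k) := by
  simp only [subMed_eq_median_window, window_eq_add h hj hk]
  exact Multiset.min_le_median_add (window_ne_zero hj le_rfl) (window_ne_zero le_rfl hk)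

end Window

section BlockRep

variable {α : Type*} [LinearOrder α] {n m : ℕ}

structure IsBlockRep (v : Fin n → α) (b : Fin (m + 1) → ℕ) (r : Fin m → α) : Prop where
  zero : b 0 = 0
  last : b (Fin.last m) = n
  strictMono_b : StrictMono b
  strictMono_r : StrictMono r
  eq_of_mem : ∀ (t : Fin m) (i : Fin n), b t.castSucc ≤ i → (i : ℕ) < b t.succ → v i = r t

namespace IsBlockRep

variable {v : Fin n → α} {b : Fin (m + 1) → ℕ} {r : Fin m → α}

theorem exists_mem_block (h : IsBlockRep v b r) (i : Fin n) :
    ∃ t : Fin m, b t.castSucc ≤ i ∧ (i : ℕ) < b t.succ := by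
  obtain ⟨τ, hτ, hmin⟩ := (Finset.univ.filter fun τ => (i : ℕ) < b τ).exists_min_image id
    ⟨Fin.last m, by simp [h.last]⟩
  have hiτ := (Finset.mem_filter.1 hτ).2
  obtain ⟨t, rfl⟩ : ∃ t : Fin m, t.succ = τ :=
    Fin.exists_succ_eq.2 fun h0 => by simp [h0, h.zero] at hiτ
  refine ⟨t, not_lt.1 fun hlt => (Fin.castSucc_lt_succ (i := t)).not_ge ?_, hiτ⟩
  exact hmin _ (Finset.mem_filter.2 ⟨Finset.mem_univ _, hlt⟩)

theorem apply_lt_of_lt_start (h : IsBlockRep v b r) {t : Fin m} {ℓ : Fin n}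
    (hℓ : (ℓ : ℕ) < b t.castSucc) : v ℓ < r t := by
  obtain ⟨τ, h₁, h₂⟩ := h.exists_mem_block ℓ
  rw [h.eq_of_mem τ ℓ h₁ h₂]
  exact h.strictMono_r (Fin.castSucc_lt_castSucc_iff.1 (h.strictMono_b.lt_iff_lt.1 (by omega)))

theorem lt_apply_of_end_le (h : IsBlockRep v b r) {t : Fin m} {ℓ : Fin n}
    (hℓ : b t.succ ≤ ℓ) : r t < v ℓ := by
  obtain ⟨τ, h₁, h₂⟩ := h.exists_mem_block ℓ
  rw [h.eq_of_mem τ ℓ h₁ h₂]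
  exact h.strictMono_r (Fin.succ_lt_succ_iff.1 (h.strictMono_b.lt_iff_lt.1 (by omega)))

end IsBlockRep

theorem Monotone.exists_le_eq_forall_lt {ι : Type*} [LinearOrder ι] [WellFoundedLT ι]
    {v : ι → α} (hv : Monotone v) (i : ι) :
    ∃ s ≤ i, v s = v i ∧ ∀ j < s, v j < v s := by
  obtain ⟨s, hs, hmin⟩ := wellFounded_lt.has_min {j | v j = v i} ⟨i, rfl⟩
  refine ⟨s, not_lt.1 fun h => hmin i rfl h, hs, fun j hj => (hv hj.le).lt_of_ne fun h => ?_⟩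
  exact hmin j (h.trans hs) hj

theorem Finset.exists_orderEmbedding_range_eq {S : Finset ℕ} {n : ℕ} (h0 : 0 ∈ S)
    (hn : n ∈ S) (hle : ∀ x ∈ S, x ≤ n) : ∃ (m : ℕ) (b : Fin (m + 1) ↪o ℕ),
      Set.range b = S ∧ b 0 = 0 ∧ b (Fin.last m) = n := by
  obtain ⟨m, hm⟩ : ∃ m, S.card = m + 1 :=
    Nat.exists_eq_succ_of_ne_zero (Finset.card_ne_zero.2 ⟨n, hn⟩)
  refine ⟨m, S.orderEmbOfFin hm, S.range_orderEmbOfFin hm, ?_, ?_⟩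
  · rw [← Fin.mk_zero, S.orderEmbOfFin_zero hm m.succ_pos]
    exact Nat.eq_zero_of_le_zero (S.min'_le 0 h0)
  · have hlast := S.orderEmbOfFin_last hm m.succ_pos
    simp only [Nat.add_sub_cancel] at hlast
    rw [Fin.last, hlast]
    exact le_antisymm (hle _ (S.max'_mem _)) (S.le_max' n hn)

theorem Monotone.exists_isBlockRep {v : Fin n → α} (hv : Monotone v) :
    ∃ (m : ℕ) (b : Fin (m + 1) → ℕ) (r : Fin m → α), IsBlockRep v b r := by
  classical
  -- the blocks start at the first index of each level set of `v`
  set S : Finset ℕ :=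
    insert 0 (insert n ((Finset.univ.filter fun i : Fin n => ∀ j < i, v j < v i).image Fin.val))
  have hS {x} : x ∈ S ↔ x = 0 ∨ x = n ∨ ∃ i : Fin n, (∀ j < i, v j < v i) ∧ (i : ℕ) = x := by
    simp [S]
  obtain ⟨m, b, hb_range, hb_zero, hb_last⟩ := Finset.exists_orderEmbedding_range_eq
    (hS.2 (.inl rfl)) (hS.2 (.inr (.inl rfl)))
    fun x hx => by rcases hS.1 hx with h | h | ⟨i, -, hi⟩ <;> omega
  have hb_mem {x} : x ∈ S ↔ ∃ τ, b τ = x := by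
    rw [← Finset.mem_coe, ← hb_range, Set.mem_range]
  have hb_lt : ∀ t : Fin m, b t.castSucc < n := fun t =>
    hb_last ▸ b.strictMono (Fin.castSucc_lt_last t)
  have hb_first : ∀ (t : Fin m) (j : Fin n), (j : ℕ) < b t.castSucc →
      v j < v ⟨b t.castSucc, hb_lt t⟩ := by
    intro t j hj
    rcases hS.1 (hb_mem.2 ⟨t.castSucc, rfl⟩) with h | h | ⟨i, hi, hbi⟩
    · omega
    · exact absurd h (hb_lt t).ne
    · convert hi j (show (j : ℕ) < i by omega)
      exact hbi.symm
  refine ⟨m, b, fun t => v ⟨b t.castSucc, hb_lt t⟩,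
    ⟨hb_zero, hb_last, b.strictMono, ?_, ?_⟩⟩
  · exact fun t t' htt' => hb_first t' _ (b.strictMono (Fin.castSucc_lt_castSucc_iff.2 htt'))
  · intro t i h₁ h₂
    obtain ⟨s, hsi, hvs, hs_first⟩ := hv.exists_le_eq_forall_lt i
    obtain ⟨τ, hτ⟩ := hb_mem.1 (hS.2 (.inr (.inr ⟨s, hs_first, rfl⟩)))
    have hτt : τ = t.castSucc := by
      refine le_antisymm (Fin.le_castSucc_iff.2 (b.strictMono.lt_iff_lt.1 ?_))
        (not_lt.1 fun hlt => ?_)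
      · rw [hτ]
        exact lt_of_le_of_lt (Fin.le_def.1 hsi) h₂
      · have hlt' := hb_first t s (hτ ▸ b.strictMono hlt)
        exact hlt'.not_ge (hvs ▸ hv (show (⟨b t.castSucc, hb_lt t⟩ : Fin n) ≤ i from h₁))
    rw [← hvs]
    congr
    ext
    rw [← hτ, hτt]

end BlockRep

section IsoMedProj

variable {n : ℕ} {Z u : Fin n → ℝ}

local notation "ũ" => isoMedProj n Z u
local notation "𝕄" j:max k:max => subMed n Z u (Z j) (Z k)

theorem isoMedProj_mono {i j : Fin n} (h : Z i ≤ Z j) : ũ i ≤ ũ j := by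
  refine Finset.sup'_le _ _ fun a ha => ?_
  have ha' : Z a ≤ Z j := (Finset.mem_filter.1 ha).2.trans h
  refine le_trans ?_ (Finset.le_sup' _ (Finset.mem_filter.2 ⟨Finset.mem_univ a, ha'⟩))
  refine Finset.le_inf' _ _ fun k hk => Finset.inf'_le _ ?_
  exact Finset.mem_filter.2 ⟨Finset.mem_univ k, h.trans (Finset.mem_filter.1 hk).2⟩

theorem exists_forall_isoMedProj_le_subMed (i : Fin n) :
    ∃ j, Z j ≤ Z i ∧ ∀ k, Z i ≤ Z k → ũ i ≤ 𝕄 j k := by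
  obtain ⟨j, hj, heq⟩ := Finset.exists_mem_eq_sup'
      (s := Finset.univ.filter fun j => Z j ≤ Z i) ⟨i, by simp⟩ fun j =>
    (Finset.univ.filter fun k => Z i ≤ Z k).inf' ⟨i, by simp⟩ fun k => 𝕄 j k
  refine ⟨j, (Finset.mem_filter.1 hj).2, fun k hk => ?_⟩
  rw [isoMedProj, heq]
  exact Finset.inf'_le _ (Finset.mem_filter.2 ⟨Finset.mem_univ k, hk⟩)

theorem exists_subMed_le_isoMedProj {i j : Fin n} (hj : Z j ≤ Z i) :
    ∃ k, Z i ≤ Z k ∧ 𝕄 j k ≤ ũ i := by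
  obtain ⟨k, hk, heq⟩ := Finset.exists_mem_eq_inf'
    (s := Finset.univ.filter fun k => Z i ≤ Z k) ⟨i, by simp⟩ fun k => 𝕄 j k
  refine ⟨k, (Finset.mem_filter.1 hk).2, ?_⟩
  rw [← heq, isoMedProj]
  exact Finset.le_sup' (fun j => (Finset.univ.filter fun k => Z i ≤ Z k).inf' ⟨i, by simp⟩
    fun k => 𝕄 j k) (Finset.mem_filter.2 ⟨Finset.mem_univ j, hj⟩)

theorem isoMedProj_eq_of_le_of_le {a b k : Fin n} (hak : Z a ≤ Z k) (hkb : Z k ≤ Z b)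
    (h : ũ a = ũ b) : ũ k = ũ a :=
  le_antisymm (h ▸ isoMedProj_mono hkb) (isoMedProj_mono hak)

theorem exists_isoMedProj_eq_lt_below (k : Fin n) :
    ∃ s, ũ s = ũ k ∧ Z s ≤ Z k ∧ ∀ ℓ, Z ℓ < Z s → ũ ℓ < ũ s := by
  obtain ⟨s, hs, hmin⟩ := (Finset.univ.filter fun ℓ => ũ ℓ = ũ k).exists_min_image Z
    ⟨k, by simp⟩
  have hs' : ũ s = ũ k := (Finset.mem_filter.1 hs).2
  refine ⟨s, hs', hmin k (by simp), fun ℓ hℓ => ?_⟩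
  exact (isoMedProj_mono hℓ.le).lt_of_ne fun h => hℓ.not_ge (hmin ℓ (by simp [h, hs']))

theorem isoMedProj_le_subMed_of_lt_below {s : Fin n} (hs : ∀ ℓ, Z ℓ < Z s → ũ ℓ < ũ s)
    (i : Fin n) (hsi : Z s ≤ Z i) (hi : ũ i = ũ s) : ũ s ≤ 𝕄 s i := by
  induction i using (Finite.wellFounded_of_trans_of_irrefl (InvImage (· < ·) Z)).induction with
  | _ i ih =>
  by_contra! hlt
  obtain ⟨j, hji, hj⟩ := exists_forall_isoMedProj_le_subMed (u := u) i
  rw [hi] at hj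
  rcases lt_or_ge (Z j) (Z s) with hjs | hsj
  · obtain ⟨p, hps, hjp⟩ := exists_consecutiveValues_below hjs
    have hjp_ge : ũ s ≤ 𝕄 j p := by
      have hsplit := subMed_le_max_of_consecutiveValues (u := u) hps hjp hsi
      exact (le_max_iff.1 ((hj i le_rfl).trans hsplit)).resolve_right hlt.not_ge
    obtain ⟨k, hpk, hk⟩ := exists_subMed_le_isoMedProj (u := u) hjp
    have hk_lt : 𝕄 j k < ũ s := hk.trans_lt (hs p hps.1)
    rcases hps.2 k with hkp | hsk
    · rw [le_antisymm hkp hpk] at hk_lt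
      exact hk_lt.not_ge hjp_ge
    rcases lt_or_ge (Z k) (Z i) with hki | hik
    · have hsk_ge := ih k hki hsk (isoMedProj_eq_of_le_of_le hsk hki.le hi.symm)
      have hsplit := min_le_subMed_of_consecutiveValues (u := u) hps hjp hsk
      rcases min_le_iff.1 hsplit with h | h <;> linarith
    · exact hk_lt.not_ge (hj k hik)
  · rcases hsj.eq_or_lt with hsj | hsj
    · rw [hsj] at hlt
      exact hlt.not_ge (hj i le_rfl)
    · obtain ⟨a, haj, hsa⟩ := exists_consecutiveValues_below hsj
      have hsa_ge := ih a (haj.1.trans_le hji) hsa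
        (isoMedProj_eq_of_le_of_le hsa (haj.1.le.trans hji) hi.symm)
      have hsplit := min_le_subMed_of_consecutiveValues (u := u) haj hsa hji
      have hji_ge := hj i le_rfl
      rcases min_le_iff.1 hsplit with h | h <;> linarith

theorem isoMedProj_lt_subMed_of_lt_above {e c : Fin n} (he : ∀ ℓ, Z e < Z ℓ → ũ e < ũ ℓ)
    (hec : ConsecutiveValues Z e c) (k : Fin n) (hck : Z c ≤ Z k) : ũ e < 𝕄 c k := by
  induction k using (Finite.wellFounded_of_trans_of_irrefl (InvImage (· < ·) Z)).induction with
  | _ k ih =>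
  obtain ⟨s, hsk, hsk_le, hs⟩ := exists_isoMedProj_eq_lt_below (u := u) k
  have hek : ũ e < ũ k := he k (hec.1.trans_le hck)
  have hs_le := isoMedProj_le_subMed_of_lt_below hs k hsk_le hsk.symm
  have hcs : Z c ≤ Z s :=
    (hec.2 s).resolve_left fun h => hek.not_ge (hsk ▸ isoMedProj_mono h)
  rcases hcs.eq_or_lt with hcs | hcs
  · rw [hcs]
    linarith
  · obtain ⟨a, has, hca⟩ := exists_consecutiveValues_below hcs
    have hca_gt := ih a (has.1.trans_le hsk_le) hca
    have hsplit := min_le_subMed_of_consecutiveValues (u := u) has hca hsk_le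
    rcases min_le_iff.1 hsplit with h | h <;> linarith

theorem subMed_le_isoMedProj_of_lt_above {e : Fin n} (he : ∀ ℓ, Z e < Z ℓ → ũ e < ũ ℓ)
    (i : Fin n) (hie : Z i ≤ Z e) (hi : ũ i = ũ e) : 𝕄 i e ≤ ũ e := by
  induction i using (Finite.wellFounded_of_trans_of_irrefl (InvImage (· > ·) Z)).induction with
  | _ i ih =>
  by_contra! hgt
  obtain ⟨k, hik, hk⟩ := exists_subMed_le_isoMedProj (u := u) (le_refl (Z i))
  rw [hi] at hk
  rcases lt_or_ge (Z e) (Z k) with hek | hke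
  · obtain ⟨c, hec, hck⟩ := exists_consecutiveValues_above hek
    have hck_gt := isoMedProj_lt_subMed_of_lt_above he hec k hck
    have hsplit := min_le_subMed_of_consecutiveValues (u := u) hec hie hck
    rcases min_le_iff.1 hsplit with h | h <;> linarith
  · rcases hke.eq_or_lt with hke | hke
    · rw [hke] at hk
      linarith
    · obtain ⟨c, hkc, hce⟩ := exists_consecutiveValues_above hke
      have hce_le := ih c (hik.trans_lt hkc.1) hce
        ((isoMedProj_eq_of_le_of_le (hik.trans hkc.1.le) hce hi).trans hi)
      have hsplit := subMed_le_max_of_consecutiveValues (u := u) hkc hik hce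
      rcases lt_max_iff.1 (hgt.trans_le hsplit) with h | h <;> linarith

variable {m : ℕ} {b : Fin (m + 1) → ℕ} {r : Fin m → ℝ}

namespace IsBlockRep

theorem le_subMed_from_start (hZ : Monotone Z) (h : IsBlockRep ũ b r) {t : Fin m} {i st : Fin n}
    (h₁ : b t.castSucc ≤ i) (h₂ : (i : ℕ) < b t.succ) (hst : (st : ℕ) = b t.castSucc) :
    r t ≤ 𝕄 st i := by
  have hst_r : ũ st = r t := h.eq_of_mem t st hst.ge (by omega)
  rw [← hst_r]
  refine isoMedProj_le_subMed_of_lt_below (fun ℓ hℓ => ?_) i (hZ (Fin.le_def.2 (by omega)))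
    ((h.eq_of_mem t i h₁ h₂).trans hst_r.symm)
  exact hst_r ▸ h.apply_lt_of_lt_start (hst ▸ Fin.lt_def.1 (hZ.reflect_lt hℓ))

theorem subMed_to_end_le (hZ : Monotone Z) (h : IsBlockRep ũ b r) {t : Fin m} {i en : Fin n}
    (h₁ : b t.castSucc ≤ i) (h₂ : (i : ℕ) < b t.succ) (hen : (en : ℕ) + 1 = b t.succ) :
    𝕄 i en ≤ r t := by
  have hen_r : ũ en = r t := h.eq_of_mem t en (by omega) (by omega)
  rw [← hen_r]
  refine subMed_le_isoMedProj_of_lt_above (fun ℓ hℓ => ?_) i (hZ (Fin.le_def.2 (by omega)))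
    ((h.eq_of_mem t i h₁ h₂).trans hen_r.symm)
  exact hen_r ▸ h.lt_apply_of_end_le (by have := Fin.lt_def.1 (hZ.reflect_lt hℓ); omega)

theorem eq_med_block (hZ : Monotone Z) (h : IsBlockRep ũ b r) (t : Fin m) :
    r t = med (((List.finRange n).filter fun ℓ : Fin n =>
      decide (b t.castSucc ≤ (ℓ : ℕ) ∧ (ℓ : ℕ) < b t.succ)).map u) := by
  have hlt : b t.castSucc < b t.succ := h.strictMono_b Fin.castSucc_lt_succ
  have hle : b t.succ ≤ n := h.last ▸ h.strictMono_b.monotone (Fin.le_last _)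
  let st : Fin n := ⟨b t.castSucc, by omega⟩
  let en : Fin n := ⟨b t.succ - 1, by omega⟩
  have hst : (st : ℕ) = b t.castSucc := rfl
  have hen : (en : ℕ) + 1 = b t.succ := by simp only [en]; omega
  have hmed : r t = 𝕄 st en :=
    le_antisymm (h.le_subMed_from_start hZ (by omega) (by omega) hst)
      (h.subMed_to_end_le hZ hst.ge (by omega) hen)
  have hst_r : ũ st = r t := h.eq_of_mem t st hst.ge (by omega)
  have hen_r : ũ en = r t := h.eq_of_mem t en (by omega) (by omega)
  rw [hmed, subMed]
  congr 2
  refine List.filter_congr fun ℓ _ => decide_eq_decide.2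
    ⟨fun ⟨h₁, h₂⟩ => ⟨not_lt.1 fun hℓ => ?_, not_le.1 fun hℓ => ?_⟩,
      fun ⟨h₁, h₂⟩ => ⟨hZ (Fin.le_def.2 h₁), hZ (Fin.le_def.2 (by omega))⟩⟩
  · exact (h.apply_lt_of_lt_start hℓ).not_ge (hst_r ▸ isoMedProj_mono h₁)
  · exact (h.lt_apply_of_end_le hℓ).not_ge (hen_r ▸ isoMedProj_mono h₂)

end IsBlockRep

end IsoMedProj

theorem isoMedProj_properties_general (n : ℕ) (Z u : Fin n → ℝ)
    (hZ : Monotone Z) :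
    (∀ i j : Fin n, 0 ≤ (Z i - Z j) * (isoMedProj n Z u i - isoMedProj n Z u j)) ∧
    (∃ (m : ℕ) (b : Fin (m + 1) → ℕ) (r : Fin m → ℝ),
      b 0 = 0 ∧ b (Fin.last m) = n ∧ StrictMono b ∧ StrictMono r ∧
      ∀ (t : Fin m) (i : Fin n),
        b t.castSucc ≤ (i : ℕ) → (i : ℕ) < b t.succ → isoMedProj n Z u i = r t) ∧
    (∀ (m : ℕ) (b : Fin (m + 1) → ℕ) (r : Fin m → ℝ),
      b 0 = 0 → b (Fin.last m) = n → StrictMono b → StrictMono r →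
      (∀ (t : Fin m) (i : Fin n),
        b t.castSucc ≤ (i : ℕ) → (i : ℕ) < b t.succ → isoMedProj n Z u i = r t) →
      ∀ t : Fin m,
        (r t = med (((List.finRange n).filter
            fun ℓ : Fin n => decide (b t.castSucc ≤ (ℓ : ℕ) ∧ (ℓ : ℕ) < b t.succ)).map u)) ∧
        ∀ (i st en : Fin n),
          b t.castSucc ≤ (i : ℕ) → (i : ℕ) < b t.succ →
          (st : ℕ) = b t.castSucc → (en : ℕ) + 1 = b t.succ →
          r t ≤ subMed n Z u (Z st) (Z i) ∧ subMed n Z u (Z i) (Z en) ≤ r t) := by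
  have hmono : Monotone (isoMedProj n Z u) := fun i j hij => isoMedProj_mono (hZ hij)
  refine ⟨fun i j => ?_, ?_, fun m b r h₀ hlast hb hr hv t => ?_⟩
  · rcases le_total (Z j) (Z i) with h | h
    · exact mul_nonneg (sub_nonneg.2 h) (sub_nonneg.2 (isoMedProj_mono h))
    · exact mul_nonneg_of_nonpos_of_nonpos (sub_nonpos.2 h) (sub_nonpos.2 (isoMedProj_mono h))
  · obtain ⟨m, b, r, h⟩ := hmono.exists_isBlockRep
    exact ⟨m, b, r, h.zero, h.last, h.strictMono_b, h.strictMono_r, h.eq_of_mem⟩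
  · have h : IsBlockRep (isoMedProj n Z u) b r := ⟨h₀, hlast, hb, hr, hv⟩
    exact ⟨h.eq_med_block hZ t, fun i st en h₁ h₂ hst hen =>
      ⟨h.le_subMed_from_start hZ h₁ h₂ hst, h.subMed_to_end_le hZ h₁ h₂ hen⟩⟩

/-- properties of the isotonic median projection: assume
`Z_1 ≤ … ≤ Z_n`. Then `ũ = isoMedProj` is isotone with respect to `Z`
(so it admits a block representation with breakpoints `0 = b_0 < … < b_m = n`
and strictly increasing block values `r_0 < … < r_{m-1}`, `ũ_i = r_t` for
`b_t ≤ i < b_{t+1}`); such a representation exists, and for any such representation: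
(a) `r_t` is the median of the `u`-values over block `t`; and
(b) for each index `i` in block `t` (with `st`, `en` the first and last index of
block `t`), `Med((u_ℓ)_{Z_{st} ≤ Z_ℓ ≤ Z_i}) ≥ r_t ≥ Med((u_ℓ)_{Z_i ≤ Z_ℓ ≤ Z_{en}})`. -/
theorem isoMedProj_properties (n : ℕ) (hn : 1 ≤ n) (Z u : Fin n → ℝ)
    (hZ : Monotone Z) :
    (∀ i j : Fin n, 0 ≤ (Z i - Z j) * (isoMedProj n Z u i - isoMedProj n Z u j)) ∧
    (∃ (m : ℕ) (b : Fin (m + 1) → ℕ) (r : Fin m → ℝ),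
      b 0 = 0 ∧ b (Fin.last m) = n ∧ StrictMono b ∧ StrictMono r ∧
      ∀ (t : Fin m) (i : Fin n),
        b t.castSucc ≤ (i : ℕ) → (i : ℕ) < b t.succ → isoMedProj n Z u i = r t) ∧
    (∀ (m : ℕ) (b : Fin (m + 1) → ℕ) (r : Fin m → ℝ),
      b 0 = 0 → b (Fin.last m) = n → StrictMono b → StrictMono r →
      (∀ (t : Fin m) (i : Fin n),
        b t.castSucc ≤ (i : ℕ) → (i : ℕ) < b t.succ → isoMedProj n Z u i = r t) →
      ∀ t : Fin m,
        (r t = med (((List.finRange n).filter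
            fun ℓ : Fin n => decide (b t.castSucc ≤ (ℓ : ℕ) ∧ (ℓ : ℕ) < b t.succ)).map u)) ∧
        ∀ (i st en : Fin n),
          b t.castSucc ≤ (i : ℕ) → (i : ℕ) < b t.succ →
          (st : ℕ) = b t.castSucc → (en : ℕ) + 1 = b t.succ →
          r t ≤ subMed n Z u (Z st) (Z i) ∧ subMed n Z u (Z i) (Z en) ≤ r t) :=
  isoMedProj_properties_general n Z u hZ

end
end

section
/- Let a ∈ ℝ^m and b ∈ ℝ^n, and let c ∈ ℝ^{m+n} be the concatenation of a and b. If Med(c) < Med(a), then Med(c) ≥ Med(b); similarly, if Med(c) > Med(a), then Med(c) ≤ Med(b). -/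
noncomputable section

/-! Write `t = Med(a ++ b)` and suppose `t < Med a` and `t < Med b`. At most half of the entries
of `a`, and at most half of those of `b`, are `≤ t`, while more than `(|a| + |b| - 1) / 2` entries
of `a ++ b` are; so `|a|` and `|b|` are even and `t` cuts each of `a`, `b`, `a ++ b` exactly in
half. The upper middle entry of `a ++ b` lies in `a`, say. Then both middle entries of `a` are
bounded by the corresponding middle entries of `a ++ b`, whence `Med a ≤ t`. The second half of
the theorem follows by negating all entries. -/

open List

/-- `orderStat l i` is the order statistic `l_{(i+1)}` (indices start at `0`); it is `0` for
`i ≥ l.length`. -/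
def orderStat (l : List ℝ) (i : ℕ) : ℝ :=
  (Multiset.sort (l : Multiset ℝ) (· ≤ ·)).getD i 0

section OrderStat

variable {l : List ℝ} {i j : ℕ} {t x : ℝ}

lemma sort_perm (l : List ℝ) : (Multiset.sort (l : Multiset ℝ) (· ≤ ·)).Perm l :=
  Multiset.coe_eq_coe.mp (Multiset.sort_eq _ _)

lemma length_sort_coe (l : List ℝ) :
    (Multiset.sort (l : Multiset ℝ) (· ≤ ·)).length = l.length := by
  simp

lemma orderStat_eq_getElem (hi : i < l.length) :
    orderStat l i = (Multiset.sort (l : Multiset ℝ) (· ≤ ·))[i]'(by simpa using hi) :=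
  getD_eq_getElem _ _ _

lemma orderStat_mem (hi : i < l.length) : orderStat l i ∈ l := by
  rw [orderStat_eq_getElem hi, ← (sort_perm l).mem_iff]
  exact getElem_mem _

lemma exists_orderStat_eq_of_mem (hx : x ∈ l) : ∃ j < l.length, orderStat l j = x := by
  obtain ⟨j, hj, rfl⟩ := mem_iff_getElem.mp ((sort_perm l).mem_iff.mpr hx)
  rw [length_sort_coe] at hj
  exact ⟨j, hj, orderStat_eq_getElem hj⟩

lemma orderStat_mono (hij : i ≤ j) (hj : j < l.length) : orderStat l i ≤ orderStat l j := by
  rw [orderStat_eq_getElem (hij.trans_lt hj), orderStat_eq_getElem hj]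
  exact (Multiset.pairwise_sort _ _).rel_get_of_le (a := ⟨i, _⟩) (b := ⟨j, _⟩) hij

lemma lt_countP_of_orderStat_le (hi : i < l.length) (h : orderStat l i ≤ t) :
    i < l.countP (· ≤ t) := by
  have hprefix :
      ((Multiset.sort (l : Multiset ℝ) (· ≤ ·)).take (i + 1)).countP (· ≤ t) = i + 1 := by
    rw [countP_eq_length.mpr, length_take, length_sort_coe]
    · omega
    rintro _ hy
    obtain ⟨j, hj, rfl⟩ := mem_take_iff_getElem.mp hy
    rw [length_sort_coe] at hj
    rw [← orderStat_eq_getElem (by omega), decide_eq_true_eq]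
    exact (orderStat_mono (by omega) hi).trans h
  rw [← (sort_perm l).countP_eq]
  refine lt_of_lt_of_le ?_ (take_sublist (i + 1) _).countP_le
  omega

lemma countP_le_of_lt_orderStat (h : t < orderStat l i) : l.countP (· ≤ t) ≤ i := by
  have hsuffix : ((Multiset.sort (l : Multiset ℝ) (· ≤ ·)).drop i).countP (· ≤ t) = 0 := by
    rw [countP_eq_zero]
    rintro _ hy
    obtain ⟨j, hj, rfl⟩ := mem_drop_iff_getElem.mp hy
    rw [length_sort_coe] at hj
    rw [← orderStat_eq_getElem (by omega), decide_eq_true_eq, not_le]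
    exact h.trans_le (orderStat_mono (by omega) (by omega))
  rw [← (sort_perm l).countP_eq, ← take_append_drop i (Multiset.sort _ _), countP_append,
    hsuffix, add_zero]
  exact countP_le_length.trans (length_take_le _ _)

lemma orderStat_le_iff (hi : i < l.length) : orderStat l i ≤ t ↔ i < l.countP (· ≤ t) :=
  ⟨lt_countP_of_orderStat_le hi,
    fun h => not_lt.mp (mt countP_le_of_lt_orderStat (not_le.mpr h))⟩

lemma le_orderStat_of_mem (hx : x ∈ l) (hxt : x ≤ t) :
    x ≤ orderStat l (l.countP (· ≤ t) - 1) := by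
  obtain ⟨j, hj, rfl⟩ := exists_orderStat_eq_of_mem hx
  have := (orderStat_le_iff hj).mp hxt
  exact orderStat_mono (by omega) (by have := l.countP_le_length (p := (· ≤ t)); omega)

lemma orderStat_le_of_mem (hx : x ∈ l) (htx : t < x) :
    orderStat l (l.countP (· ≤ t)) ≤ x := by
  obtain ⟨j, hj, rfl⟩ := exists_orderStat_eq_of_mem hx
  exact orderStat_mono (countP_le_of_lt_orderStat htx) hj

lemma sort_map_neg (l : List ℝ) :
    Multiset.sort ((l.map (-·) : List ℝ) : Multiset ℝ) (· ≤ ·)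
      = ((Multiset.sort (l : Multiset ℝ) (· ≤ ·)).map (-·)).reverse := by
  refine Perm.eq_of_pairwise' (r := (· ≤ ·)) (Multiset.pairwise_sort _ _) ?_ ?_
  · rw [pairwise_reverse, pairwise_map]
    exact (Multiset.pairwise_sort _ _).imp neg_le_neg
  · exact (sort_perm _).trans (((sort_perm l).map _).symm.trans (reverse_perm _).symm)

lemma orderStat_map_neg (hi : i < l.length) :
    orderStat (l.map (-·)) i = -orderStat l (l.length - 1 - i) := by
  rw [orderStat, sort_map_neg, getD_eq_getElem _ _ (by simpa using hi), getElem_reverse,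
    getElem_map, orderStat_eq_getElem (by omega)]
  simp

end OrderStat

def lowerMed (l : List ℝ) : ℝ := orderStat l ((l.length - 1) / 2)

def upperMed (l : List ℝ) : ℝ := orderStat l (l.length / 2)

section Median

variable {l : List ℝ} {t : ℝ}

lemma med_eq_lowerMed_add_upperMed (l : List ℝ) : med l = (lowerMed l + upperMed l) / 2 := by
  unfold med lowerMed upperMed orderStat
  split_ifs with hodd
  · rw [show (l.length - 1) / 2 = l.length / 2 by omega]
    ring
  · rw [show (l.length - 1) / 2 = l.length / 2 - 1 by omega]

lemma upperMed_mem (hl : l ≠ []) : upperMed l ∈ l :=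
  orderStat_mem (Nat.div_lt_self (length_pos_iff.mpr hl) one_lt_two)

lemma lowerMed_le_upperMed (hl : l ≠ []) : lowerMed l ≤ upperMed l :=
  orderStat_mono (by omega) (Nat.div_lt_self (length_pos_iff.mpr hl) one_lt_two)

lemma lowerMed_le_med (hl : l ≠ []) : lowerMed l ≤ med l := by
  linarith [med_eq_lowerMed_add_upperMed l, lowerMed_le_upperMed hl]

lemma med_le_upperMed (hl : l ≠ []) : med l ≤ upperMed l := by
  linarith [med_eq_lowerMed_add_upperMed l, lowerMed_le_upperMed hl]

lemma countP_le_of_lt_med (hl : l ≠ []) (h : t < med l) : l.countP (· ≤ t) ≤ l.length / 2 :=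
  countP_le_of_lt_orderStat (h.trans_le (med_le_upperMed hl))

lemma lt_countP_med (hl : l ≠ []) : (l.length - 1) / 2 < l.countP (· ≤ med l) :=
  lt_countP_of_orderStat_le (by have := length_pos_iff.mpr hl; omega) (lowerMed_le_med hl)

lemma med_map_neg (l : List ℝ) : med (l.map (-·)) = -med l := by
  rcases eq_or_ne l [] with rfl | hl
  · simp [med]
  have := length_pos_iff.mpr hl
  rw [med_eq_lowerMed_add_upperMed, med_eq_lowerMed_add_upperMed l, lowerMed, upperMed,
    lowerMed, upperMed, length_map, orderStat_map_neg (by omega), orderStat_map_neg (by omega),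
    show l.length - 1 - (l.length - 1) / 2 = l.length / 2 by omega,
    show l.length - 1 - l.length / 2 = (l.length - 1) / 2 by omega]
  ring

end Median

lemma med_le_med_of_perm_append {a b c : List ℝ} (hc : c.Perm (a ++ b)) (hb : b ≠ [])
    (hbc : med c < med b) (hup : upperMed c ∈ a) : med a ≤ med c := by
  by_contra! hac
  set t := med c
  have ha : a ≠ [] := ne_nil_of_mem hup
  have hcne : c ≠ [] := ne_nil_of_mem (hc.mem_iff.mpr (mem_append_left b hup))
  have hm := length_pos_iff.mpr ha
  have hlen : c.length = a.length + b.length := by rw [hc.length_eq, length_append]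
  have hcount : c.countP (· ≤ t) = a.countP (· ≤ t) + b.countP (· ≤ t) := by
    rw [hc.countP_eq, countP_append]
  have hca := countP_le_of_lt_med ha hac
  have hcb := countP_le_of_lt_med hb hbc
  have hcc : (c.length - 1) / 2 < c.countP (· ≤ t) := lt_countP_med hcne
  have hlower : lowerMed a ≤ lowerMed c := by
    have hle : lowerMed a ≤ t := (orderStat_le_iff (by omega)).mpr (by omega)
    have := le_orderStat_of_mem (hc.mem_iff.mpr (mem_append_left b (orderStat_mem (by omega)))) hle
    rwa [show c.countP (· ≤ t) - 1 = (c.length - 1) / 2 by omega] at this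
  have htc : t < upperMed c := by
    by_contra! h
    have := lt_countP_of_orderStat_le (by omega) h
    omega
  have hupper : upperMed a ≤ upperMed c := by
    have := orderStat_le_of_mem hup htc
    rwa [show a.countP (· ≤ t) = a.length / 2 by omega] at this
  have ht : t = (lowerMed c + upperMed c) / 2 := med_eq_lowerMed_add_upperMed c
  linarith [med_eq_lowerMed_add_upperMed a]

theorem min_med_le_med_append (a b : List ℝ) : min (med a) (med b) ≤ med (a ++ b) := by
  rcases eq_or_ne a [] with rfl | ha
  · simp
  rcases eq_or_ne b [] with rfl | hb
  · simp
  by_contra! h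
  obtain ⟨hta, htb⟩ := lt_min_iff.mp h
  rcases mem_append.mp (upperMed_mem (append_ne_nil_of_left_ne_nil ha b)) with hup | hup
  · exact (med_le_med_of_perm_append (Perm.refl _) hb htb hup).not_gt hta
  · exact (med_le_med_of_perm_append perm_append_comm ha hta hup).not_gt htb

theorem med_append_le_max_med (a b : List ℝ) : med (a ++ b) ≤ max (med a) (med b) := by
  have := min_med_le_med_append (a.map (-·)) (b.map (-·))
  rwa [← map_append, med_map_neg, med_map_neg, med_map_neg, min_neg_neg, neg_le_neg_iff] at this

theorem med_concat_general (a b : List ℝ) :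
    (med (a ++ b) < med a → med b ≤ med (a ++ b)) ∧
    (med a < med (a ++ b) → med (a ++ b) ≤ med b) :=
  ⟨fun h => not_lt.mp fun h' => (min_med_le_med_append a b).not_gt (lt_min h h'),
    fun h => not_lt.mp fun h' => (med_append_le_max_med a b).not_gt (max_lt h h')⟩

/-- if `c` is the concatenation of `a ∈ ℝ^m` and `b ∈ ℝ^n`, then
`Med(c) < Med(a)` implies `Med(c) ≥ Med(b)`, and `Med(c) > Med(a)` implies
`Med(c) ≤ Med(b)`. -/
theorem med_concat (a b : List ℝ) (ha : a ≠ []) (hb : b ≠ []) :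
    (med (a ++ b) < med a → med b ≤ med (a ++ b)) ∧
    (med a < med (a ++ b) → med (a ++ b) ≤ med b) :=
  med_concat_general a b

end
end

section
/- For all p, q ∈ (0,1), the squared Hellinger distance between Bernoulli distributions satisfies H²(Ber(p), Ber(q)) = (√p − √q)² + (√(1−p) − √(1−q))² ≤ 2(p−q)² / ((p+q)(2−p−q)) ≤ min{ (p−q)²/(p(1−p)), (p−q)²/(q(1−q)) }. -/
/-- Hellinger distance between Bernoulli distributions: for
`p, q ∈ (0,1)`,
`H²(Ber(p),Ber(q)) = (√p−√q)² + (√(1−p)−√(1−q))² ≤ 2(p−q)²/((p+q)(2−p−q))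
  ≤ min{(p−q)²/(p(1−p)), (p−q)²/(q(1−q))}`. -/
theorem bernoulli_hellinger (p q : ℝ) (hp : p ∈ Set.Ioo (0 : ℝ) 1)
    (hq : q ∈ Set.Ioo (0 : ℝ) 1) :
    (Real.sqrt p - Real.sqrt q) ^ 2 + (Real.sqrt (1 - p) - Real.sqrt (1 - q)) ^ 2
        ≤ 2 * (p - q) ^ 2 / ((p + q) * (2 - p - q)) ∧
      2 * (p - q) ^ 2 / ((p + q) * (2 - p - q))
        ≤ min ((p - q) ^ 2 / (p * (1 - p))) ((p - q) ^ 2 / (q * (1 - q))) := by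
  obtain ⟨hp0, hp1⟩ := hp
  obtain ⟨hq0, hq1⟩ := hq
  have hD : 0 < (p + q) * (2 - p - q) := by nlinarith
  constructor
  · set a := Real.sqrt p with ha
    set b := Real.sqrt q with hb
    set c := Real.sqrt (1 - p) with hc
    set d := Real.sqrt (1 - q) with hd
    have ha2 : a ^ 2 = p := Real.sq_sqrt hp0.le
    have hb2 : b ^ 2 = q := Real.sq_sqrt hq0.le
    have hc2 : c ^ 2 = 1 - p := Real.sq_sqrt (by linarith)
    have hd2 : d ^ 2 = 1 - q := Real.sq_sqrt (by linarith)
    have han : 0 ≤ a := Real.sqrt_nonneg _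
    have hbn : 0 ≤ b := Real.sqrt_nonneg _
    have hcn : 0 ≤ c := Real.sqrt_nonneg _
    have hdn : 0 ≤ d := Real.sqrt_nonneg _
    rw [le_div_iff₀ hD]
    have h1 : (a - b) ^ 2 * (p + q) ≤ (p - q) ^ 2 := by nlinarith [mul_nonneg han hbn, sq_nonneg (a - b)]
    have h2 : (c - d) ^ 2 * (2 - p - q) ≤ (p - q) ^ 2 := by nlinarith [mul_nonneg hcn hdn, sq_nonneg (c - d)]
    have hS : 0 < p + q := by linarith
    have hT : 0 < 2 - p - q := by linarith
    nlinarith [mul_le_mul_of_nonneg_right h1 hT.le, mul_le_mul_of_nonneg_right h2 hS.le]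
  · rw [le_min_iff]
    constructor
    · rw [div_le_div_iff₀ hD (by nlinarith)]
      nlinarith [sq_nonneg ((p-q)*(p-q)), mul_nonneg (sq_nonneg (p-q)) (mul_nonneg hq0.le (by linarith : (0:ℝ) ≤ 1 - q))]
    · rw [div_le_div_iff₀ hD (by nlinarith)]
      nlinarith [sq_nonneg ((p-q)*(p-q)), mul_nonneg (sq_nonneg (p-q)) (mul_nonneg hp0.le (by linarith : (0:ℝ) ≤ 1 - p))]
end

section
/- Let P be any probability distribution on ℝ with finite variance, with quantile function F⁻¹ (the generalized inverse of the distribution function of P), and define the deviance Dev(P) = ∫₀¹ (F⁻¹(1−q) − F⁻¹(q))² dq. Then 2·Var_{X~P}(X) ≤ Dev(P) ≤ 4·Var_{X~P}(X). Moreover, if P is symmetric around its mean, then Dev(P) = 4·Var_{X~P}(X). -/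
/-!
Under the uniform measure on `(0, 1)` both `q ↦ F⁻¹(q)` and `q ↦ F⁻¹(1 - q)` have law `P`.
Writing `a = F⁻¹(q)` and `b = F⁻¹(1 - q)`, the upper bound integrates
`(b - a)² ≤ 2 (b - μ)² + 2 (a - μ)²`. For the lower bound compare with `m = F⁻¹(1/2)`: since
`F⁻¹` is monotone, `a` and `b` lie on opposite sides of `m`, so `(b - a)² ≥ (b - m)² + (a - m)²`,
which integrates to `2 E (X - m)² ≥ 2 Var X`. If `P` is symmetric about `c`, then
`F⁻¹(1 - q) = c - F⁻¹(q)` except at the countably many levels `q` of flat pieces of `F`, so the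
integrand is `4 (F⁻¹(q) - c / 2)²`.
-/

open MeasureTheory Set ProbabilityTheory

noncomputable section

/-- The quantile function (generalized inverse distribution function) of a probability
measure `P` on `ℝ`: `F⁻¹(q) = inf {x : F(x) ≥ q}` where `F(x) = P(-∞, x]`. -/
def quantileFn (P : Measure ℝ) (q : ℝ) : ℝ :=
  sInf {x : ℝ | q ≤ (P (Set.Iic x)).toReal}

/-- The deviance of a distribution `P` on `ℝ`:
`Dev(P) = ∫₀¹ (F⁻¹(1−q) − F⁻¹(q))² dq`. -/
def deviance (P : Measure ℝ) : ℝ :=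
  ∫ q in Set.Ioo (0 : ℝ) 1, (quantileFn P (1 - q) - quantileFn P q) ^ 2

/-- The variance of a distribution `P` on `ℝ`. -/
def distVar (P : Measure ℝ) : ℝ :=
  ∫ x, (x - ∫ y, y ∂P) ^ 2 ∂P

lemma distVar_le_integral_sub_sq (P : Measure ℝ) [IsProbabilityMeasure P] (a : ℝ) :
    distVar P ≤ ∫ x, (x - a) ^ 2 ∂P := by
  calc distVar P = Var[fun x => x - a; P] := by
        rw [variance_sub_const (X := fun x => x) (by fun_prop),
          variance_eq_integral (by fun_prop)]
        rfl
    _ ≤ ∫ x, (x - a) ^ 2 ∂P := variance_le_expectation_sq (by fun_prop)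

lemma MonotoneOn.sub_apply_half_mul_sub_apply_half_nonpos {h : ℝ → ℝ}
    (hh : MonotoneOn h (Ioo 0 1)) {q : ℝ} (hq : q ∈ Ioo 0 1) :
    (h (1 - q) - h (1 / 2)) * (h q - h (1 / 2)) ≤ 0 := by
  have hq' : 1 - q ∈ Ioo (0 : ℝ) 1 := ⟨by linarith [hq.2], by linarith [hq.1]⟩
  have hhalf : (1 / 2 : ℝ) ∈ Ioo (0 : ℝ) 1 := by norm_num
  rcases le_total q (1 / 2) with hle | hle
  · exact mul_nonpos_of_nonneg_of_nonpos
      (sub_nonneg.2 (hh hhalf hq' (by linarith))) (sub_nonpos.2 (hh hq hhalf hle))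
  · exact mul_nonpos_of_nonpos_of_nonneg
      (sub_nonpos.2 (hh hq' hhalf (by linarith))) (sub_nonneg.2 (hh hhalf hq hle))

section Representation

variable {ν P : Measure ℝ} {g : ℝ → ℝ}

lemma memLp_two_of_map_eq (hg : AEMeasurable g ν) (hmap : ν.map g = P)
    (hvar : Integrable (fun x => x ^ 2) P) : MemLp g 2 ν := by
  rw [← hmap, ← memLp_two_iff_integrable_sq (f := fun x => x) (by fun_prop)] at hvar
  exact (memLp_map_measure_iff (by fun_prop) hg).1 hvar

lemma integral_sq_sub_of_map_eq (hg : AEMeasurable g ν) (hmap : ν.map g = P) (a : ℝ) :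
    ∫ q, (g q - a) ^ 2 ∂ν = ∫ x, (x - a) ^ 2 ∂P := by
  rw [← hmap, integral_map hg (by fun_prop)]

lemma integrable_sq_sub_of_map_eq [IsFiniteMeasure ν] (hg : AEMeasurable g ν)
    (hmap : ν.map g = P) (hvar : Integrable (fun x => x ^ 2) P) (a : ℝ) :
    Integrable (fun q => (g q - a) ^ 2) ν :=
  ((memLp_two_of_map_eq hg hmap hvar).sub (memLp_const a)).integrable_sq

end Representation

section Quantile

variable {P : Measure ℝ} {q x : ℝ}

lemma bddBelow_setOf_le_cdf (hq : 0 < q) : BddBelow {x | q ≤ cdf P x} := by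
  obtain ⟨x, hx⟩ := ((tendsto_cdf_atBot P).eventually (eventually_lt_nhds hq)).exists
  exact ⟨x, fun y hy => le_of_not_gt fun hyx => (hy.trans (monotone_cdf P hyx.le)).not_gt hx⟩

lemma nonempty_setOf_le_cdf (hq : q < 1) : {x | q ≤ cdf P x}.Nonempty :=
  ((tendsto_cdf_atTop P).eventually (eventually_ge_nhds hq)).exists

variable [IsProbabilityMeasure P]

lemma quantileFn_eq_sInf_cdf : quantileFn P q = sInf {x | q ≤ cdf P x} := by
  simp only [quantileFn, cdf_eq_real, measureReal_def]

lemma quantileFn_le_iff (hq : q ∈ Ioo 0 1) : quantileFn P q ≤ x ↔ q ≤ cdf P x := by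
  rw [quantileFn_eq_sInf_cdf]
  refine ⟨fun hle => ?_, fun hx => csInf_le (bddBelow_setOf_le_cdf hq.1) hx⟩
  rw [← (cdf P).iInf_Ioi_eq x]
  refine le_ciInf fun y => ?_
  obtain ⟨z, hz, hzy⟩ := exists_lt_of_csInf_lt (nonempty_setOf_le_cdf hq.2) (hle.trans_lt y.2)
  exact hz.trans (monotone_cdf P hzy.le)

lemma quantileFn_monotoneOn : MonotoneOn (quantileFn P) (Ioo 0 1) :=
  fun _ hq _ hq' hle => (quantileFn_le_iff hq).2 (hle.trans ((quantileFn_le_iff hq').1 le_rfl))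

lemma aemeasurable_quantileFn : AEMeasurable (quantileFn P) (volume.restrict (Ioo 0 1)) :=
  aemeasurable_restrict_of_monotoneOn measurableSet_Ioo quantileFn_monotoneOn

lemma map_quantileFn : (volume.restrict (Ioo 0 1)).map (quantileFn P) = P := by
  refine Measure.ext_of_Iic _ _ fun x => ?_
  have hpre : quantileFn P ⁻¹' Iic x ∩ Ioo 0 1 = Iic (cdf P x) ∩ Ioo 0 1 := by
    ext q
    simp only [mem_inter_iff, mem_preimage, mem_Iic, and_congr_left_iff]
    exact fun hq => quantileFn_le_iff hq
  rw [Measure.map_apply_of_aemeasurable aemeasurable_quantileFn measurableSet_Iic,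
    Measure.restrict_apply' measurableSet_Ioo, hpre, inter_comm,
    measure_congr ((Ioo_ae_eq_Ioc (μ := volume)).inter (ae_eq_refl (Iic (cdf P x)))),
    Ioc_inter_Iic, min_eq_right (cdf_le_one P x), Real.volume_Ioc, sub_zero, ofReal_cdf]

lemma measurePreserving_one_sub :
    MeasurePreserving (fun q : ℝ => 1 - q) (volume.restrict (Ioo 0 1))
      (volume.restrict (Ioo 0 1)) := by
  have h := (Measure.measurePreserving_sub_left volume (1 : ℝ)).restrict_preimage
    measurableSet_Ioo (s := Ioo 0 1)
  rwa [preimage_const_sub_Ioo, sub_zero, sub_self] at h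

lemma aemeasurable_quantileFn_one_sub :
    AEMeasurable (fun q => quantileFn P (1 - q)) (volume.restrict (Ioo 0 1)) :=
  aemeasurable_restrict_of_antitoneOn measurableSet_Ioo fun q hq q' hq' hle =>
    quantileFn_monotoneOn ⟨by linarith [hq'.2], by linarith [hq'.1]⟩
      ⟨by linarith [hq.2], by linarith [hq.1]⟩ (by linarith)

lemma map_quantileFn_one_sub :
    (volume.restrict (Ioo 0 1)).map (fun q => quantileFn P (1 - q)) = P := by
  have h : AEMeasurable (quantileFn P)
      ((volume.restrict (Ioo 0 1)).map (fun q : ℝ => 1 - q)) := by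
    rw [measurePreserving_one_sub.map_eq]
    exact aemeasurable_quantileFn
  change Measure.map (quantileFn P ∘ fun q => 1 - q) _ = P
  rw [← h.map_map_of_aemeasurable measurePreserving_one_sub.measurable.aemeasurable,
    measurePreserving_one_sub.map_eq, map_quantileFn]

section Symmetric

variable {c : ℝ}

lemma cdf_eq_one_sub_measureReal_Iio (hsym : P.map (fun x => c - x) = P) (x : ℝ) :
    cdf P x = 1 - P.real (Iio (c - x)) := by
  calc cdf P x = (P.map (fun x => c - x)).real (Iic x) := by rw [hsym, cdf_eq_real]
    _ = 1 - P.real (Iio (c - x)) := by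
      rw [map_measureReal_apply (by fun_prop) measurableSet_Iic, preimage_const_sub_Iic,
        ← compl_Iio, probReal_compl_eq_one_sub measurableSet_Iio]

lemma le_sub_quantileFn_one_sub_iff (hsym : P.map (fun x => c - x) = P) (hq : q ∈ Ioo 0 1) :
    x ≤ c - quantileFn P (1 - q) ↔ P.real (Iio x) ≤ q := by
  rw [le_sub_comm, quantileFn_le_iff ⟨by linarith [hq.2], by linarith [hq.1]⟩,
    cdf_eq_one_sub_measureReal_Iio hsym, sub_sub_cancel, sub_le_sub_iff_left]

/-- Off the values `cdf P r` (`r : ℚ`), `F⁻¹(q)` is also the largest `x` with `P (-∞, x) ≤ q`;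
by `le_sub_quantileFn_one_sub_iff` that is the description of `c - F⁻¹(1 - q)`. -/
lemma quantileFn_one_sub_eq_of_notMem (hsym : P.map (fun x => c - x) = P) (hq : q ∈ Ioo 0 1)
    (hnq : q ∉ range fun r : ℚ => cdf P r) :
    quantileFn P (1 - q) = c - quantileFn P q := by
  suffices quantileFn P q = c - quantileFn P (1 - q) by linarith
  rcases lt_trichotomy (quantileFn P q) (c - quantileFn P (1 - q)) with hlt | h | hgt
  · obtain ⟨r₁, hr₁, hr₁k⟩ := exists_rat_btwn hlt
    obtain ⟨r₂, hr₁₂, hr₂⟩ := exists_rat_btwn hr₁k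
    refine absurd ⟨r₁, le_antisymm ?_ ((quantileFn_le_iff hq).1 hr₁.le)⟩ hnq
    calc cdf P r₁ ≤ P.real (Iio (r₂ : ℝ)) := by
          rw [cdf_eq_real]
          exact measureReal_mono (Iic_subset_Iio.2 (by exact_mod_cast hr₁₂))
      _ ≤ q := (le_sub_quantileFn_one_sub_iff hsym hq).1 hr₂.le
  · exact h
  · obtain ⟨r, hkr, hr⟩ := exists_rat_btwn hgt
    have h₁ : q < P.real (Iio (r : ℝ)) :=
      lt_of_not_ge fun h => hkr.not_ge ((le_sub_quantileFn_one_sub_iff hsym hq).2 h)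
    have h₂ : cdf P r < q := lt_of_not_ge fun h => hr.not_ge ((quantileFn_le_iff hq).2 h)
    have h₃ : P.real (Iio (r : ℝ)) ≤ cdf P r := by
      rw [cdf_eq_real]
      exact measureReal_mono Iio_subset_Iic_self
    linarith

lemma quantileFn_one_sub_ae_eq (hsym : P.map (fun x => c - x) = P) :
    ∀ᵐ q ∂(volume.restrict (Ioo 0 1)), quantileFn P (1 - q) = c - quantileFn P q := by
  have hnull : volume.restrict (Ioo 0 1) (range fun r : ℚ => cdf P r) = 0 :=
    (countable_range _).measure_zero _
  filter_upwards [ae_restrict_mem measurableSet_Ioo, measure_eq_zero_iff_ae_notMem.1 hnull]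
    with q hq hnq using quantileFn_one_sub_eq_of_notMem hsym hq hnq

end Symmetric

end Quantile

section Deviance

variable {P : Measure ℝ} [IsProbabilityMeasure P]

lemma deviance_le_four_mul_distVar (hvar : Integrable (fun x => x ^ 2) P) :
    deviance P ≤ 4 * distVar P := by
  set m := ∫ y, y ∂P
  have hYm := integrable_sq_sub_of_map_eq aemeasurable_quantileFn_one_sub
    map_quantileFn_one_sub hvar m
  have hXm := integrable_sq_sub_of_map_eq aemeasurable_quantileFn map_quantileFn hvar m
  calc deviance P ≤ ∫ q in Ioo 0 1,
        (2 * (quantileFn P (1 - q) - m) ^ 2 + 2 * (quantileFn P q - m) ^ 2) := by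
        refine integral_mono_of_nonneg (ae_of_all _ fun _ => sq_nonneg _)
          ((hYm.const_mul 2).add (hXm.const_mul 2)) (ae_of_all _ fun q => ?_)
        nlinarith [sq_nonneg (quantileFn P (1 - q) + quantileFn P q - 2 * m)]
    _ = 4 * distVar P := by
      rw [integral_add (hYm.const_mul 2) (hXm.const_mul 2), integral_const_mul,
        integral_const_mul,
        integral_sq_sub_of_map_eq aemeasurable_quantileFn_one_sub map_quantileFn_one_sub,
        integral_sq_sub_of_map_eq aemeasurable_quantileFn map_quantileFn, distVar]
      ring

lemma two_mul_distVar_le_deviance (hvar : Integrable (fun x => x ^ 2) P) :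
    2 * distVar P ≤ deviance P := by
  set m := quantileFn P (1 / 2)
  have hYm := integrable_sq_sub_of_map_eq aemeasurable_quantileFn_one_sub
    map_quantileFn_one_sub hvar m
  have hXm := integrable_sq_sub_of_map_eq aemeasurable_quantileFn map_quantileFn hvar m
  have hdev : IntegrableOn (fun q => (quantileFn P (1 - q) - quantileFn P q) ^ 2) (Ioo 0 1) :=
    ((memLp_two_of_map_eq aemeasurable_quantileFn_one_sub map_quantileFn_one_sub hvar).sub
      (memLp_two_of_map_eq aemeasurable_quantileFn map_quantileFn hvar)).integrable_sq
  calc 2 * distVar P ≤ 2 * ∫ x, (x - m) ^ 2 ∂P := by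
        gcongr
        exact distVar_le_integral_sub_sq P m
    _ = ∫ q in Ioo 0 1, ((quantileFn P (1 - q) - m) ^ 2 + (quantileFn P q - m) ^ 2) := by
      rw [integral_add hYm hXm,
        integral_sq_sub_of_map_eq aemeasurable_quantileFn_one_sub map_quantileFn_one_sub,
        integral_sq_sub_of_map_eq aemeasurable_quantileFn map_quantileFn, two_mul]
    _ ≤ deviance P := by
      refine setIntegral_mono_on (hYm.add hXm) hdev measurableSet_Ioo fun q hq => ?_
      have hcross : (quantileFn P (1 - q) - m) * (quantileFn P q - m) ≤ 0 :=
        quantileFn_monotoneOn.sub_apply_half_mul_sub_apply_half_nonpos hq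
      nlinarith

lemma deviance_eq_of_map_const_sub {c : ℝ} (hsym : P.map (fun x => c - x) = P) :
    deviance P = 4 * ∫ x, (x - c / 2) ^ 2 ∂P := by
  calc deviance P = ∫ q in Ioo 0 1, 4 * (quantileFn P q - c / 2) ^ 2 := by
        refine integral_congr_ae ((quantileFn_one_sub_ae_eq hsym).mono fun q hq => ?_)
        simp only [hq]
        ring
    _ = 4 * ∫ x, (x - c / 2) ^ 2 ∂P := by
      rw [integral_const_mul, integral_sq_sub_of_map_eq aemeasurable_quantileFn map_quantileFn]

end Deviance

/-- deviance and variance: for any probability distribution `P` on `ℝ`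
with finite variance, `2 Var(P) ≤ Dev(P) ≤ 4 Var(P)`; moreover, if `P` is symmetric
around its mean then `Dev(P) = 4 Var(P)`. -/
theorem deviance_variance (P : Measure ℝ) [IsProbabilityMeasure P]
    (hvar : Integrable (fun x => x ^ 2) P) :
    (2 * distVar P ≤ deviance P ∧ deviance P ≤ 4 * distVar P) ∧
      (P.map (fun x => 2 * (∫ y, y ∂P) - x) = P → deviance P = 4 * distVar P) := by
  refine ⟨⟨two_mul_distVar_le_deviance hvar, deviance_le_four_mul_distVar hvar⟩, fun hsym => ?_⟩
  rw [deviance_eq_of_map_const_sub hsym, mul_div_cancel_left₀ _ two_ne_zero, distVar]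

end
end

section
/- For m ≥ 1, define f_m: [−1,1]^m × [−1,1]^m → [0,∞) by f_m(y, y') = Σ_{i=1}^{⌊m/2⌋} max{ y_{(m+1−i)} − y'_{(i)}, 0 }², where y_{(1)} ≤ … ≤ y_{(m)} and y'_{(1)} ≤ … ≤ y'_{(m)} are the sorted values of y and y'. Then f_m satisfies the Lipschitz property |f_m(y, y') − f_m(ỹ, ỹ')| ≤ 4‖y − ỹ‖₁ + 4‖y' − ỹ'‖₁ for all (y,y'), (ỹ,ỹ') ∈ [−1,1]^m × [−1,1]^m. -/
noncomputable section

/-- The cross-bin matching statistic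
`f_m(y, y') = ∑_{i=1}^{⌊m/2⌋} max{y_{(m+1−i)} − y'_{(i)}, 0}²`,
where `y_{(1)} ≤ … ≤ y_{(m)}` (resp. `y'`) are the sorted values of `y` (resp. `y'`).
Here, for `i : Fin m` with `(i : ℕ) < m/2`, the `i`-th smallest entry of `y'` (0-indexed)
is paired with the `i`-th largest entry of `y` (index `Fin.rev i`). -/
def crossBinStat (m : ℕ) (y y' : Fin m → ℝ) : ℝ :=
  ∑ i : Fin m,
    if (i : ℕ) < m / 2 then
      (max (y (Tuple.sort y (Fin.rev i)) - y' (Tuple.sort y' i)) 0) ^ 2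
    else 0

/-- Order statistics are monotone under pointwise domination. -/
lemma sorted_le_sorted_of_le {m : ℕ} (f g : Fin m → ℝ) (h : ∀ j, f j ≤ g j) (i : Fin m) :
    f (Tuple.sort f i) ≤ g (Tuple.sort g i) := by
  by_contra hc
  push_neg at hc
  set σ := Tuple.sort f
  set τ := Tuple.sort g
  set S : Finset (Fin m) := (Finset.Iic i).image τ
  set T : Finset (Fin m) := (Finset.Iic i).image σ
  have hST : S ⊆ T := by
    intro j hj
    obtain ⟨k, hk, rfl⟩ := Finset.mem_image.1 hj
    have h1 : g (τ k) ≤ g (τ i) := Tuple.monotone_sort g (Finset.mem_Iic.1 hk)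
    have h2 : f (τ k) < f (σ i) := lt_of_le_of_lt (le_trans (h _) h1) hc
    by_contra hT
    obtain ⟨l, hl⟩ := σ.surjective (τ k)
    rw [← hl] at h2
    have hli : ¬ l ≤ i := fun hle => hT (hl ▸ Finset.mem_image.2 ⟨l, Finset.mem_Iic.2 hle, rfl⟩)
    exact absurd (Tuple.monotone_sort f (le_of_not_ge hli)) (not_le.2 h2)
  have hcardS : S.card = i + 1 := by
    rw [Finset.card_image_of_injective _ τ.injective, Fin.card_Iic]
  have hcardT : T.card = i + 1 := by
    rw [Finset.card_image_of_injective _ σ.injective, Fin.card_Iic]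
  have hSeqT : S = T := Finset.eq_of_subset_of_card_le hST (by omega)
  have hσi : σ i ∈ S := hSeqT ▸ Finset.mem_image.2 ⟨i, Finset.mem_Iic.2 le_rfl, rfl⟩
  obtain ⟨k, hk, hkeq⟩ := Finset.mem_image.1 hσi
  have : g (τ k) ≤ g (τ i) := Tuple.monotone_sort g (Finset.mem_Iic.1 hk)
  rw [hkeq] at this
  exact absurd (le_trans (h _) this) (not_le.2 hc)

/-- ℓ₁ contraction of sorting. -/
lemma sum_abs_sorted_le {m : ℕ} (f g : Fin m → ℝ) :
    ∑ i, |f (Tuple.sort f i) - g (Tuple.sort g i)| ≤ ∑ i, |f i - g i| := by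
  set h : Fin m → ℝ := fun j => max (f j) (g j) with hh
  have key : ∀ i, |f (Tuple.sort f i) - g (Tuple.sort g i)|
      ≤ 2 * h (Tuple.sort h i) - f (Tuple.sort f i) - g (Tuple.sort g i) := by
    intro i
    have h1 : f (Tuple.sort f i) ≤ h (Tuple.sort h i) :=
      sorted_le_sorted_of_le f h (fun j => le_max_left _ _) i
    have h2 : g (Tuple.sort g i) ≤ h (Tuple.sort h i) :=
      sorted_le_sorted_of_le g h (fun j => le_max_right _ _) i
    rw [abs_sub_le_iff]
    constructor <;> linarith
  calc ∑ i, |f (Tuple.sort f i) - g (Tuple.sort g i)|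
      ≤ ∑ i, (2 * h (Tuple.sort h i) - f (Tuple.sort f i) - g (Tuple.sort g i)) :=
        Finset.sum_le_sum fun i _ => key i
    _ = 2 * (∑ i, h (Tuple.sort h i)) - (∑ i, f (Tuple.sort f i))
          - (∑ i, g (Tuple.sort g i)) := by
        rw [Finset.mul_sum, ← Finset.sum_sub_distrib, ← Finset.sum_sub_distrib]
    _ = 2 * (∑ i, h i) - (∑ i, f i) - (∑ i, g i) := by
        rw [Equiv.sum_comp (Tuple.sort h) h, Equiv.sum_comp (Tuple.sort f) f,
          Equiv.sum_comp (Tuple.sort g) g]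
    _ = ∑ i, (2 * h i - f i - g i) := by
        rw [Finset.mul_sum, ← Finset.sum_sub_distrib, ← Finset.sum_sub_distrib]
    _ = ∑ i, |f i - g i| := by
        refine Finset.sum_congr rfl fun i _ => ?_
        rcases le_total (f i) (g i) with hle | hle
        · rw [abs_of_nonpos (by linarith), hh]; simp [max_eq_right hle]; ring
        · rw [abs_of_nonneg (by linarith), hh]; simp [max_eq_left hle]; ring

/-- Per-term Lipschitz bound. -/
lemma term_lip (a b c d : ℝ) (ha : a ∈ Set.Icc (-1:ℝ) 1) (hb : b ∈ Set.Icc (-1:ℝ) 1)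
    (hc : c ∈ Set.Icc (-1:ℝ) 1) (hd : d ∈ Set.Icc (-1:ℝ) 1) :
    |(max (a - b) 0) ^ 2 - (max (c - d) 0) ^ 2| ≤ 4 * |a - c| + 4 * |b - d| := by
  obtain ⟨ha1, ha2⟩ := ha; obtain ⟨hb1, hb2⟩ := hb
  obtain ⟨hc1, hc2⟩ := hc; obtain ⟨hd1, hd2⟩ := hd
  set u := max (a - b) 0
  set v := max (c - d) 0
  have hu0 : 0 ≤ u := le_max_right _ _
  have hv0 : 0 ≤ v := le_max_right _ _
  have hu2 : u ≤ 2 := max_le (by linarith) (by norm_num)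
  have hv2 : v ≤ 2 := max_le (by linarith) (by norm_num)
  have huv : |u - v| ≤ |a - c| + |b - d| := by
    calc |u - v| ≤ |(a - b) - (c - d)| := abs_max_sub_max_le_abs _ _ _
      _ ≤ |a - c| + |b - d| := by
          have : (a - b) - (c - d) = (a - c) - (b - d) := by ring
          rw [this]; exact abs_sub _ _
  have : |u ^ 2 - v ^ 2| = |u - v| * |u + v| := by
    rw [← abs_mul]; ring_nf
  rw [this]
  have h4 : |u + v| ≤ 4 := by rw [abs_of_nonneg (by linarith)]; linarith
  calc |u - v| * |u + v| ≤ (|a - c| + |b - d|) * 4 := by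
        apply mul_le_mul huv h4 (abs_nonneg _) (by positivity)
    _ = 4 * |a - c| + 4 * |b - d| := by ring

/-- Lipschitz property of the cross-bin matching statistic: for
`m ≥ 1` and vectors in `[−1,1]^m`,
`|f_m(y,y') − f_m(ỹ,ỹ')| ≤ 4‖y − ỹ‖₁ + 4‖y' − ỹ'‖₁`. -/
theorem crossBinStat_lipschitz (m : ℕ) (hm : 1 ≤ m)
    (y y' ty ty' : Fin m → ℝ)
    (hy : ∀ i, y i ∈ Set.Icc (-1 : ℝ) 1) (hy' : ∀ i, y' i ∈ Set.Icc (-1 : ℝ) 1)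
    (hty : ∀ i, ty i ∈ Set.Icc (-1 : ℝ) 1) (hty' : ∀ i, ty' i ∈ Set.Icc (-1 : ℝ) 1) :
    |crossBinStat m y y' - crossBinStat m ty ty'|
      ≤ 4 * (∑ i, |y i - ty i|) + 4 * (∑ i, |y' i - ty' i|) := by
  have step1 : |crossBinStat m y y' - crossBinStat m ty ty'|
      ≤ ∑ i : Fin m, (4 * |y (Tuple.sort y (Fin.rev i)) - ty (Tuple.sort ty (Fin.rev i))|
          + 4 * |y' (Tuple.sort y' i) - ty' (Tuple.sort ty' i)|) := by
    unfold crossBinStat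
    rw [← Finset.sum_sub_distrib]
    refine (Finset.abs_sum_le_sum_abs _ _).trans (Finset.sum_le_sum fun i _ => ?_)
    by_cases hi : (i : ℕ) < m / 2
    · simp only [hi, if_true]
      exact term_lip _ _ _ _ (hy _) (hy' _) (hty _) (hty' _)
    · simp only [hi, if_false, sub_zero, abs_zero]
      positivity
  refine step1.trans ?_
  rw [Finset.sum_add_distrib, ← Finset.mul_sum, ← Finset.mul_sum]
  have h1 : ∑ i : Fin m, |y (Tuple.sort y (Fin.rev i)) - ty (Tuple.sort ty (Fin.rev i))|
      ≤ ∑ i, |y i - ty i| := by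
    calc ∑ i : Fin m, |y (Tuple.sort y (Fin.rev i)) - ty (Tuple.sort ty (Fin.rev i))|
        = ∑ i : Fin m, |y (Tuple.sort y i) - ty (Tuple.sort ty i)| :=
          Fintype.sum_bijective Fin.rev Fin.rev_bijective _ _ (fun i => rfl)
      _ ≤ ∑ i, |y i - ty i| := sum_abs_sorted_le y ty
  have h2 : ∑ i : Fin m, |y' (Tuple.sort y' i) - ty' (Tuple.sort ty' i)|
      ≤ ∑ i, |y' i - ty' i| := sum_abs_sorted_le y' ty'
  have := sum_abs_sorted_le y ty
  nlinarith [h1, h2]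

end
end
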